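/- arXiv:1505.02691 — 17 statements merged into one kernel-verified Lean document; each statement's English description precedes it below -/
import Mathlib

section
/- Let k ≥ 2, let ρ be a non-empty h-ary relation on **k**, and let 1 ≤ ℓ ≤ k. If h < ℓ and Ω_{<ℓ}(k) ⊆ pPol^{(1)}(ρ), then pPol^{(1)}(ρ) is the set of all unary partial functions on **k**. -/
/-- A unary partial function on `Fin k`: a domain together with a value map
(values outside the domain are irrelevant). -/
structure PFun1 (k : ℕ) where
  Dom : Set (Fin k)
  toFun : Fin k → Fin k

/-- A unary partial function `f` preserves the `h`-ary relation `ρ` if whenever a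
tuple of `ρ` has all its entries in the domain of `f`, the image tuple is in `ρ`. -/
def Preserves1 {k h : ℕ} (f : PFun1 k) (ρ : Set (Fin h → Fin k)) : Prop :=
  ∀ M : Fin h → Fin k, M ∈ ρ → (∀ i, M i ∈ f.Dom) → (fun i => f.toFun (M i)) ∈ ρ

/-- `pPol^{(1)}(ρ)`: the set of unary partial functions preserving `ρ`. -/
def pPol1 {k : ℕ} (h : ℕ) (ρ : Set (Fin h → Fin k)) : Set (PFun1 k) :=
  { f | Preserves1 f ρ }

/-- `Ω_{<ℓ}(k)`: unary partial functions that are restrictions of the identity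
or whose image has fewer than `ℓ` elements. -/
def Omega (k ℓ : ℕ) : Set (PFun1 k) :=
  { f | (∀ x ∈ f.Dom, f.toFun x = x) ∨ (f.toFun '' f.Dom).ncard < ℓ }

/-- `Ψ_ℓ(k)`: unary partial functions with domain of size `ℓ` not in `Ω_{<ℓ}(k)`. -/
def Psi (k ℓ : ℕ) : Set (PFun1 k) :=
  { f | f.Dom.ncard = ℓ ∧ f ∉ Omega k ℓ }

/-- `g` is a subfunction of `f`. -/
def Sub1 {k : ℕ} (g f : PFun1 k) : Prop :=
  g.Dom ⊆ f.Dom ∧ ∀ x ∈ g.Dom, g.toFun x = f.toFun x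

/-- `ρ` is hereditarily `ℓ`-rigid: `pPol^{(1)}(ρ) = Ω_{<ℓ}(k)`. -/
def HereditarilyRigid {k : ℕ} (h : ℕ) (ℓ : ℕ) (ρ : Set (Fin h → Fin k)) : Prop :=
  pPol1 h ρ = Omega k ℓ

/-- `T_ρ^ℓ(x)`: the set of surjective `i : [h] → [ℓ]` with `x ∘ i ∈ ρ`. -/
def Tset {k h : ℕ} (ℓ : ℕ) (ρ : Set (Fin h → Fin k)) (x : Fin ℓ → Fin k) :
    Set (Fin h → Fin ℓ) :=
  { i | Function.Surjective i ∧ x ∘ i ∈ ρ }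

/-- `s(h, ℓ)`: the number of surjections from an `h`-element set onto an `ℓ`-element set. -/
noncomputable def numSurj (h ℓ : ℕ) : ℕ := Nat.card { i : Fin h → Fin ℓ // Function.Surjective i }

/-- If `h < ℓ` and `Ω_{<ℓ}(k) ⊆ pPol^{(1)}(ρ)`, then `pPol^{(1)}(ρ)` is the set
of all unary partial functions. -/
theorem pPol_eq_univ_of_arity_lt (k h ℓ : ℕ) (hk : 2 ≤ k) (hℓ1 : 1 ≤ ℓ) (hℓk : ℓ ≤ k)
    (hhℓ : h < ℓ) (ρ : Set (Fin h → Fin k)) (hρ : ρ.Nonempty)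
    (hsub : Omega k ℓ ⊆ pPol1 h ρ) :
    pPol1 h ρ = Set.univ := by
  ext f
  simp only [Set.mem_univ, iff_true]
  intro M hM hMdom
  set g : PFun1 k := ⟨Set.range M, f.toFun⟩ with hg
  have hgΩ : g ∈ Omega k ℓ := by
    right
    calc (g.toFun '' g.Dom).ncard = ((f.toFun ∘ M) '' Set.univ).ncard := by
          rw [Set.image_comp, Set.image_univ]
      _ ≤ (Set.univ : Set (Fin h)).ncard := Set.ncard_image_le Set.finite_univ
      _ = h := by rw [Set.ncard_univ, Nat.card_eq_fintype_card, Fintype.card_fin]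
      _ < ℓ := hhℓ
  exact hsub hgΩ M hM (fun i => Set.mem_range_self i)
end

section
/- Let k ≥ 2 and 1 ≤ ℓ ≤ k. If ρ is a non-empty h-ary hereditarily ℓ-rigid relation on **k**, then h ≥ ℓ. -/
/-- A non-empty `h`-ary hereditarily `ℓ`-rigid relation satisfies `h ≥ ℓ`. -/
theorem arity_ge_of_hereditarilyRigid (k h ℓ : ℕ) (hk : 2 ≤ k) (hℓ1 : 1 ≤ ℓ) (hℓk : ℓ ≤ k)
    (ρ : Set (Fin h → Fin k)) (hρ : ρ.Nonempty) (hrig : HereditarilyRigid h ℓ ρ) :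
    ℓ ≤ h := by
  by_contra hlt
  push_neg at hlt
  -- key: any recoloring of a tuple of ρ stays in ρ
  have key : ∀ M ∈ ρ, ∀ g : Fin k → Fin k, (fun i => g (M i)) ∈ ρ := by
    intro M hM g
    have hf : (⟨Set.range M, g⟩ : PFun1 k) ∈ Omega k ℓ := by
      right
      show (g '' Set.range M).ncard < ℓ
      have h1 : (g '' Set.range M).ncard ≤ (Set.range M).ncard :=
        Set.ncard_image_le (Set.toFinite _)
      have h2 : (Set.range M).ncard ≤ h := by
        rw [← Set.image_univ]
        calc (M '' Set.univ).ncard ≤ (Set.univ : Set (Fin h)).ncard :=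
              Set.ncard_image_le (Set.toFinite _)
          _ = h := by simp [Set.ncard_univ]
      omega
    have hp : (⟨Set.range M, g⟩ : PFun1 k) ∈ pPol1 h ρ := by
      rw [hrig]; exact hf
    exact hp M hM (fun i => Set.mem_range_self i)
  obtain ⟨m, hm⟩ := hρ
  set a : Fin k := ⟨0, by omega⟩
  set b : Fin k := ⟨1, by omega⟩
  have hab : a ≠ b := by simp [a, b, Fin.ext_iff]
  set g : Fin k → Fin k := ⇑(Equiv.swap a b)
  have hpres : (⟨Set.univ, g⟩ : PFun1 k) ∈ pPol1 h ρ := by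
    intro M hM _
    exact key M hM g
  rw [hrig] at hpres
  rcases hpres with hid | hsmall
  · have := hid a (Set.mem_univ a)
    simp only [g, Equiv.swap_apply_left] at this
    exact hab this.symm
  · have himg : g '' Set.univ = Set.univ := by
      rw [Set.image_univ]
      exact (Equiv.swap a b).surjective.range_eq
    rw [himg, Set.ncard_univ, Nat.card_eq_fintype_card, Fintype.card_fin] at hsmall
    omega
end

section
/- Let k ≥ 2, 1 ≤ ℓ ≤ k, let ρ be a non-empty h-ary hereditarily ℓ-rigid relation on **k**, and let f ∈ Ψ_ℓ(k). Then there exists a tuple x ∈ ρ with img(x) = dom(f), where img(x) denotes the set of entries of the h-tuple x. -/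
/-- If `ρ` is a non-empty hereditarily `ℓ`-rigid relation and `f ∈ Ψ_ℓ(k)`,
then some tuple `x ∈ ρ` has set of entries equal to the domain of `f`. -/
theorem exists_tuple_range_eq_dom (k h ℓ : ℕ) (hk : 2 ≤ k) (hℓ1 : 1 ≤ ℓ) (hℓk : ℓ ≤ k)
    (ρ : Set (Fin h → Fin k)) (hρ : ρ.Nonempty) (hrig : HereditarilyRigid h ℓ ρ)
    (f : PFun1 k) (hf : f ∈ Psi k ℓ) :
    ∃ x ∈ ρ, Set.range x = f.Dom := by
  obtain ⟨hdom, hnot⟩ := hf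
  have hfp : ¬ Preserves1 f ρ := by rw [← hrig] at hnot; exact hnot
  simp only [Preserves1, not_forall] at hfp
  obtain ⟨M, hMρ, hMdom, hMf⟩ := hfp
  refine ⟨M, hMρ, ?_⟩
  have hsub : Set.range M ⊆ f.Dom := Set.range_subset_iff.mpr hMdom
  by_contra hne
  have hss : Set.range M ⊂ f.Dom := ⟨hsub, fun h' => hne (hsub.antisymm h')⟩
  have hlt : (Set.range M).ncard < ℓ := by
    have := Set.ncard_lt_ncard hss f.Dom.toFinite
    omega
  set g : PFun1 k := ⟨Set.range M, f.toFun⟩ with hg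
  have hgΩ : g ∈ Omega k ℓ := by
    right
    exact lt_of_le_of_lt (Set.ncard_image_le (Set.range M).toFinite) hlt
  rw [← hrig] at hgΩ
  exact hMf (hgΩ M hMρ (fun i => Set.mem_range_self i))
end

section
/- Let k ≥ 2, ℓ ≥ 1, and let f be a unary partial function on **k**. If every subfunction g ≤ f with |dom(g)| = ℓ belongs to Ω_{<ℓ}(k), then f ∈ Ω_{<ℓ}(k). -/
/-!
If `f` is not a restriction of the identity, pick `x ∈ dom f` with `f x ≠ x`. If moreover
`|img f| ≥ ℓ`, choose `ℓ` values of `f` including `f x` and one preimage of each, taking `x`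
as the preimage of `f x`. The restriction of `f` to these `ℓ` points is injective, so it has
`ℓ` values and still moves `x`: a subfunction with domain of size `ℓ` outside `Ω_{<ℓ}(k)`.
-/

open Set

theorem Set.exists_injOn_mem_subset_ncard_eq {α β : Type*} {f : α → β} {s : Set α} {a : α}
    (ha : a ∈ s) {n : ℕ} (hn_pos : 1 ≤ n) (hn : n ≤ (f '' s).ncard) :
    ∃ t ⊆ s, a ∈ t ∧ InjOn f t ∧ t.ncard = n := by
  obtain ⟨u, hfa, hus, hu⟩ := exists_subsuperset_card_eq
    (singleton_subset_iff.mpr (mem_image_of_mem f ha)) (by simpa using hn_pos) hn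
  have hbij_a : BijOn f {a} {f a} := bijOn_singleton.mpr rfl
  obtain ⟨t, hat, hts, hbij⟩ := hbij_a.exists_extend_of_subset (singleton_subset_iff.mpr ha) hfa
    (surjOn_image f s |>.mono le_rfl hus)
  exact ⟨t, hts, singleton_subset_iff.mp hat, hbij.injOn,
    hbij.injOn.ncard_image.symm.trans (hbij.image_eq ▸ hu)⟩

theorem mem_Omega_of_subfunctions_general (k ℓ : ℕ) (hℓ : 1 ≤ ℓ) (f : PFun1 k)
    (H : ∀ g : PFun1 k, Sub1 g f → g.Dom.ncard = ℓ → g ∈ Omega k ℓ) :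
    f ∈ Omega k ℓ := by
  by_contra hf
  simp only [Omega, mem_ofPred_eq, not_or, not_forall, not_lt] at hf
  obtain ⟨⟨x, hx, hfx⟩, himg⟩ := hf
  obtain ⟨t, hts, hxt, hinj, ht⟩ := exists_injOn_mem_subset_ncard_eq hx hℓ himg
  rcases H ⟨t, f.toFun⟩ ⟨hts, fun _ _ => rfl⟩ ht with hid | hsmall
  · exact hfx (hid x hxt)
  · exact hsmall.ne (hinj.ncard_image.trans ht)

/-- If every subfunction of `f` with domain of size `ℓ` belongs to
`Ω_{<ℓ}(k)`, then so does `f`. -/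
theorem mem_Omega_of_subfunctions (k ℓ : ℕ) (hk : 2 ≤ k) (hℓ : 1 ≤ ℓ) (f : PFun1 k)
    (H : ∀ g : PFun1 k, Sub1 g f → g.Dom.ncard = ℓ → g ∈ Omega k ℓ) :
    f ∈ Omega k ℓ :=
  mem_Omega_of_subfunctions_general k ℓ hℓ f H
end

section
/- Let k ≥ 2, 1 ≤ ℓ ≤ k, and let ρ be a non-empty h-ary relation on **k**. Then ρ is hereditarily ℓ-rigid if and only if pPol^{(1)}(ρ) ∩ Ψ_ℓ(k) = ∅ and Ω_{<ℓ}(k) ⊆ pPol^{(1)}(ρ). -/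
namespace Set

variable {α : Type*} {f : α → α} {s t : Set α} {a d : α}

theorem exists_subset_ncard_eq_injOn {ℓ : ℕ} (hℓ : ℓ ≤ (f '' s).ncard) :
    ∃ t ⊆ s, t.ncard = ℓ ∧ InjOn f t := by
  obtain ⟨u, hus, hbij⟩ := exists_subset_bijOn s f
  have hu : (f '' s).ncard = u.ncard := hbij.image_eq ▸ hbij.injOn.ncard_image
  obtain ⟨t, htu, rfl⟩ := exists_subset_card_eq (hℓ.trans_eq hu)
  exact ⟨t, htu.trans hus, rfl, hbij.injOn.mono htu⟩

theorem injOn_insert_diff_singleton_of_eqOn_id (hid : ∀ x ∈ t, f x = x) (hfa : f a ≠ a)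
    (hd : f a ∈ t → f a = d) : InjOn f (insert a (t \ {d})) := by
  have hat : a ∉ t := fun ha => hfa (hid a ha)
  refine (injOn_insert fun ha => hat ha.1).2 ⟨fun x hx y hy hxy => ?_, ?_⟩
  · rwa [hid x hx.1, hid y hy.1] at hxy
  · rintro ⟨x, ⟨hxt, hxd⟩, hx⟩
    rw [hid x hxt] at hx
    exact hxd (hd (hx ▸ hxt) ▸ hx)

theorem exists_subset_ncard_eq_injOn_not_eqOn_id {ℓ : ℕ} (hℓ1 : 1 ≤ ℓ)
    (hℓ : ℓ ≤ (f '' s).ncard) (has : a ∈ s) (hfa : f a ≠ a) :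
    ∃ t ⊆ s, t.ncard = ℓ ∧ InjOn f t ∧ ∃ x ∈ t, f x ≠ x := by
  obtain ⟨t, hts, htℓ, hinj⟩ := exists_subset_ncard_eq_injOn hℓ
  by_cases hid : ∀ x ∈ t, f x = x
  · obtain ⟨d, hdt, hd⟩ : ∃ d ∈ t, f a ∈ t → f a = d := by
      by_cases hfat : f a ∈ t
      · exact ⟨f a, hfat, fun _ => rfl⟩
      · obtain ⟨d, hdt⟩ := nonempty_of_ncard_ne_zero (by omega : t.ncard ≠ 0)
        exact ⟨d, hdt, fun h => absurd h hfat⟩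
    refine ⟨insert a (t \ {d}), insert_subset has (sdiff_subset.trans hts), ?_,
      injOn_insert_diff_singleton_of_eqOn_id hid hfa hd, a, mem_insert a _, hfa⟩
    rw [ncard_exchange (fun hat => hfa (hid a hat)) hdt, htℓ]
  · push Not at hid
    exact ⟨t, hts, htℓ, hinj, hid⟩

end Set

theorem Preserves1.of_sub1 {k h : ℕ} {f g : PFun1 k} {ρ : Set (Fin h → Fin k)} (hgf : Sub1 g f)
    (hf : Preserves1 f ρ) : Preserves1 g ρ := by
  intro M hM hMg
  have hfg : (fun i => f.toFun (M i)) = fun i => g.toFun (M i) :=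
    funext fun i => (hgf.2 (M i) (hMg i)).symm
  exact hfg ▸ hf M hM fun i => hgf.1 (hMg i)

theorem exists_sub1_mem_Psi_of_notMem_Omega {k ℓ : ℕ} (hℓ1 : 1 ≤ ℓ) {f : PFun1 k}
    (hf : f ∉ Omega k ℓ) :
    ∃ g, Sub1 g f ∧ g ∈ Psi k ℓ := by
  simp only [Omega, Set.mem_ofPred_eq, not_or, not_forall, not_lt] at hf
  obtain ⟨⟨a, has, hfa⟩, hℓ⟩ := hf
  obtain ⟨t, hts, htℓ, hinj, x, hxt, hfx⟩ :=
    Set.exists_subset_ncard_eq_injOn_not_eqOn_id hℓ1 hℓ has hfa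
  refine ⟨⟨t, f.toFun⟩, ⟨hts, fun _ _ => rfl⟩, htℓ, ?_⟩
  rintro (hid | hlt)
  · exact hfx (hid x hxt)
  · exact hlt.ne (hinj.ncard_image.trans htℓ)

theorem hereditarilyRigid_iff_general (k h ℓ : ℕ) (hℓ1 : 1 ≤ ℓ)
    (ρ : Set (Fin h → Fin k)) :
    HereditarilyRigid h ℓ ρ ↔ pPol1 h ρ ∩ Psi k ℓ = ∅ ∧ Omega k ℓ ⊆ pPol1 h ρ := by
  refine ⟨fun H => ⟨?_, H.symm.subset⟩, fun ⟨hempty, hsub⟩ => Set.Subset.antisymm ?_ hsub⟩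
  · exact Set.eq_empty_iff_forall_notMem.2 fun f hf => hf.2.2 (H ▸ hf.1)
  · intro f hf
    by_contra hfΩ
    obtain ⟨g, hgf, hgΨ⟩ := exists_sub1_mem_Psi_of_notMem_Omega hℓ1 hfΩ
    exact hempty.subset ⟨Preserves1.of_sub1 hgf hf, hgΨ⟩

/-- `ρ` is hereditarily `ℓ`-rigid iff `pPol^{(1)}(ρ) ∩ Ψ_ℓ(k) = ∅` and
`Ω_{<ℓ}(k) ⊆ pPol^{(1)}(ρ)`. -/
theorem hereditarilyRigid_iff (k h ℓ : ℕ) (hk : 2 ≤ k) (hℓ1 : 1 ≤ ℓ) (hℓk : ℓ ≤ k)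
    (ρ : Set (Fin h → Fin k)) (hρ : ρ.Nonempty) :
    HereditarilyRigid h ℓ ρ ↔ pPol1 h ρ ∩ Psi k ℓ = ∅ ∧ Omega k ℓ ⊆ pPol1 h ρ :=
  hereditarilyRigid_iff_general k h ℓ hℓ1 ρ
end

section
/- Let k ≥ 2, ℓ ≥ 2, let ρ be an h-ary relation on **k**, and let x, y ∈ β_ℓ^ℓ(**k**). Suppose Ψ_m(k) ⊆ pPol^{(1)}(ρ) for every m with 1 ≤ m < ℓ. If T_ρ^ℓ(x) ⊆ T_ρ^ℓ(y), then F_{x→y} ∈ pPol^{(1)}(ρ). -/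
/-- If `Ψ_m(k) ⊆ pPol^{(1)}(ρ)` for all `1 ≤ m < ℓ` and `T_ρ^ℓ(x) ⊆ T_ρ^ℓ(y)`,
then `F_{x→y}` (domain `img x`, sending `x j` to `y j`) preserves `ρ`. -/
theorem Fxy_mem_pPol_of_Tset_subset (k h ℓ : ℕ) (hk : 2 ≤ k) (hℓ : 2 ≤ ℓ)
    (ρ : Set (Fin h → Fin k)) (x y : Fin ℓ → Fin k)
    (hx : Function.Injective x) (hy : Function.Injective y)
    (hΨ : ∀ m : ℕ, 1 ≤ m → m < ℓ → Psi k m ⊆ pPol1 h ρ)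
    (hT : Tset ℓ ρ x ⊆ Tset ℓ ρ y)
    (f : PFun1 k) (hfd : f.Dom = Set.range x) (hfv : ∀ j, f.toFun (x j) = y j) :
    f ∈ pPol1 h ρ := by
  intro M hMρ hMdom
  have hMr : ∀ i, ∃ j, x j = M i := by
    intro i; have := hMdom i; rw [hfd] at this; exact this
  choose i' hi' using hMr
  have hMx : M = x ∘ i' := by funext i; exact (hi' i).symm
  have hfM : ∀ i, f.toFun (M i) = y (i' i) := by
    intro i; rw [← hi' i, hfv]
  by_cases hsurj : Function.Surjective i'
  · have hmem : i' ∈ Tset ℓ ρ x := ⟨hsurj, by rw [← hMx]; exact hMρ⟩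
    have h2 := hT hmem
    have he : (fun i => f.toFun (M i)) = y ∘ i' := by funext i; exact hfM i
    rw [he]; exact h2.2
  · by_cases hid : ∀ j ∈ Set.range i', x j = y j
    · have he : (fun i => f.toFun (M i)) = M := by
        funext i
        rw [hfM i, ← hid (i' i) ⟨i, rfl⟩, hi' i]
      rw [he]; exact hMρ
    · rcases Nat.eq_zero_or_pos h with h0 | hpos
      · subst h0
        have he : (fun i => f.toFun (M i)) = M := by funext i; exact i.elim0
        rw [he]; exact hMρ
      · set S : Set (Fin ℓ) := Set.range i' with hS
        set m := S.ncard with hmdef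
        have hSfin : S.Finite := Set.toFinite S
        have hm1 : 1 ≤ m := by
          have hne : S.Nonempty := ⟨i' ⟨0, hpos⟩, ⟨_, rfl⟩⟩
          exact (Set.ncard_pos hSfin).mpr hne
        have hmℓ : m < ℓ := by
          have hSne : S ⊂ Set.univ := by
            refine ⟨Set.subset_univ S, fun hcon => hsurj fun b => hcon (Set.mem_univ b)⟩
          have := Set.ncard_lt_ncard hSne (Set.finite_univ)
          rwa [Set.ncard_univ, Nat.card_eq_fintype_card, Fintype.card_fin] at this
        set g : PFun1 k := ⟨x '' S, f.toFun⟩ with hg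
        have hgPsi : g ∈ Psi k m := by
          constructor
          · show (x '' S).ncard = m
            rw [Set.ncard_image_of_injective S hx]
          · intro hOm
            rcases hOm with hI | hC
            · push_neg at hid
              obtain ⟨j, hjS, hjne⟩ := hid
              have : g.toFun (x j) = x j := hI (x j) ⟨j, hjS, rfl⟩
              rw [show g.toFun (x j) = y j from hfv j] at this
              exact hjne this.symm
            · have himg : g.toFun '' g.Dom = y '' S := by
                show f.toFun '' (x '' S) = y '' S
                rw [Set.image_image]
                exact Set.image_congr' (fun j => hfv j)
              rw [himg, Set.ncard_image_of_injective S hy] at hC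
              exact absurd hC (lt_irrefl m)
        have hpres := hΨ m hm1 hmℓ hgPsi M hMρ
          (fun i => ⟨i' i, ⟨i, rfl⟩, hi' i⟩)
        exact hpres
end

section
/- Let k ≥ 2, 2 ≤ ℓ ≤ k, and let ρ be a non-empty h-ary hereditarily ℓ-rigid relation on **k**. Then the family (T_ρ^ℓ(x))_{x ∈ β_ℓ^ℓ(**k**)} is an antichain with respect to set inclusion: for all distinct x, y ∈ β_ℓ^ℓ(**k**), T_ρ^ℓ(x) is not a subset of T_ρ^ℓ(y). -/
/-- If `ρ` is a non-empty hereditarily `ℓ`-rigid relation (`2 ≤ ℓ ≤ k`),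
then the family `(T_ρ^ℓ(x))_{x ∈ β_ℓ^ℓ(k)}` is an antichain under inclusion. -/
theorem Tset_antichain_of_hereditarilyRigid (k h ℓ : ℕ) (hk : 2 ≤ k) (hℓ2 : 2 ≤ ℓ)
    (hℓk : ℓ ≤ k) (ρ : Set (Fin h → Fin k)) (hρ : ρ.Nonempty)
    (hrig : HereditarilyRigid h ℓ ρ) :
    ∀ x y : Fin ℓ → Fin k, Function.Injective x → Function.Injective y → x ≠ y →
      ¬ Tset ℓ ρ x ⊆ Tset ℓ ρ y := by
  classical
  intro x y hx hy hxy hsub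
  have hrig' : pPol1 h ρ = Omega k ℓ := hrig
  set f : PFun1 k :=
    ⟨Set.range x, fun a => if ha : a ∈ Set.range x then y ha.choose else a⟩ with hf
  have hfx : ∀ i, f.toFun (x i) = y i := by
    intro i
    have ha : x i ∈ Set.range x := ⟨i, rfl⟩
    simp only [hf]
    rw [dif_pos ha]
    exact congrArg y (hx ha.choose_spec)
  have hfpres : f ∈ pPol1 h ρ := by
    intro M hM hdom
    have hex : ∀ j, ∃ t, x t = M j := fun j => hdom j
    set i : Fin h → Fin ℓ := fun j => (hex j).choose with hi
    have hMi : ∀ j, x (i j) = M j := fun j => (hex j).choose_spec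
    have hfM : (fun j => f.toFun (M j)) = fun j => y (i j) := by
      funext j; rw [← hMi j, hfx]
    by_cases hs : Function.Surjective i
    · have hmem : i ∈ Tset ℓ ρ x := ⟨hs, by
        have hxi : x ∘ i = M := funext hMi
        show x ∘ i ∈ ρ
        rw [hxi]; exact hM⟩
      have hiy := hsub hmem
      rw [hfM]
      exact hiy.2
    · set g : PFun1 k := ⟨Set.range M, f.toFun⟩ with hg
      have hgomega : g ∈ Omega k ℓ := by
        right
        have himg : g.toFun '' g.Dom = y '' Set.range i := by
          ext a
          simp only [hg, Set.mem_image, Set.mem_range]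
          constructor
          · rintro ⟨b, ⟨j, rfl⟩, rfl⟩
            exact ⟨i j, ⟨j, rfl⟩, (congrFun hfM j).symm⟩
          · rintro ⟨t, ⟨j, rfl⟩, rfl⟩
            exact ⟨M j, ⟨j, rfl⟩, congrFun hfM j⟩
        rw [himg]
        calc (y '' Set.range i).ncard = (Set.range i).ncard :=
              Set.ncard_image_of_injective _ hy
          _ < (Set.univ : Set (Fin ℓ)).ncard := by
              apply Set.ncard_lt_ncard _ Set.finite_univ
              exact Set.ssubset_univ_iff.mpr
                (fun hc => hs (Set.range_eq_univ.mp hc))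
          _ = ℓ := by simp [Set.ncard_univ]
      have hgpres : g ∈ pPol1 h ρ := by rw [hrig']; exact hgomega
      exact hgpres M hM (fun j => ⟨j, rfl⟩)
  rw [hrig'] at hfpres
  rcases hfpres with hid | hlt
  · apply hxy
    funext i
    have hyi := hid (x i) ⟨i, rfl⟩
    rw [hfx] at hyi
    exact hyi.symm
  · have himg : f.toFun '' f.Dom = Set.range y := by
      ext a
      constructor
      · rintro ⟨b, ⟨i, rfl⟩, rfl⟩; exact ⟨i, (hfx i).symm⟩
      · rintro ⟨i, rfl⟩; exact ⟨x i, ⟨i, rfl⟩, hfx i⟩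
    rw [himg] at hlt
    have hcard : (Set.range y).ncard = ℓ := by
      rw [← Set.image_univ, Set.ncard_image_of_injective _ hy, Set.ncard_univ]
      simp
    omega
end

section
/- Let k ≥ 2, 2 ≤ ℓ ≤ k, and let ρ be a non-empty h-ary relation on **k** with Ω_{<ℓ}(k) ⊆ pPol^{(1)}(ρ). If for all distinct x, y ∈ β_ℓ^ℓ(**k**) the set T_ρ^ℓ(x) is not a subset of T_ρ^ℓ(y), then ρ is hereditarily ℓ-rigid. -/
/-- If `Ω_{<ℓ}(k) ⊆ pPol^{(1)}(ρ)` and the family `(T_ρ^ℓ(x))_{x ∈ β_ℓ^ℓ(k)}`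
is an antichain under inclusion, then `ρ` is hereditarily `ℓ`-rigid. -/
theorem hereditarilyRigid_of_Tset_antichain (k h ℓ : ℕ) (hk : 2 ≤ k) (hℓ2 : 2 ≤ ℓ)
    (hℓk : ℓ ≤ k) (ρ : Set (Fin h → Fin k)) (hρ : ρ.Nonempty)
    (hΩ : Omega k ℓ ⊆ pPol1 h ρ)
    (hanti : ∀ x y : Fin ℓ → Fin k, Function.Injective x → Function.Injective y → x ≠ y →
      ¬ Tset ℓ ρ x ⊆ Tset ℓ ρ y) :
    HereditarilyRigid h ℓ ρ := by
  classical
  apply Set.Subset.antisymm _ hΩ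
  intro f hf
  by_contra hfΩ
  simp only [Omega, Set.mem_setOf_eq, not_or, not_forall, not_lt] at hfΩ
  obtain ⟨⟨a, ha, hfa⟩, hcard⟩ := hfΩ
  set I : Set (Fin k) := f.toFun '' f.Dom with hI
  have hfaI : f.toFun a ∈ I := ⟨a, ha, rfl⟩
  have hsing : ({f.toFun a} : Set (Fin k)).ncard ≤ ℓ := by
    rw [Set.ncard_singleton]; omega
  obtain ⟨V, hsV, hVI, hVcard⟩ :=
    Set.exists_subsuperset_card_eq (Set.singleton_subset_iff.2 hfaI) hsing hcard
  have hVfin : V.Finite := Set.toFinite V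
  have : Nat.card V = ℓ := by rw [Nat.card_coe_set_eq, hVcard]
  let e : V ≃ Fin ℓ := Finite.equivFinOfCardEq this
  -- preimage chooser
  let P : Fin k → Fin k := fun v =>
    if v = f.toFun a then a
    else if hv : ∃ u ∈ f.Dom, f.toFun u = v then hv.choose else a
  have hPdom : ∀ v ∈ V, P v ∈ f.Dom := by
    intro v hv
    by_cases hva : v = f.toFun a
    · simp [P, hva, ha]
    · obtain ⟨u, hu, huv⟩ := hVI hv
      have hex : ∃ u ∈ f.Dom, f.toFun u = v := ⟨u, hu, huv⟩
      simp only [P, hva, if_false, dif_pos hex]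
      exact hex.choose_spec.1
  have hPval : ∀ v ∈ V, f.toFun (P v) = v := by
    intro v hv
    by_cases hva : v = f.toFun a
    · simp [P, hva]
    · obtain ⟨u, hu, huv⟩ := hVI hv
      have hex : ∃ u ∈ f.Dom, f.toFun u = v := ⟨u, hu, huv⟩
      simp only [P, hva, if_false, dif_pos hex]
      exact hex.choose_spec.2
  set x : Fin ℓ → Fin k := fun j => P (e.symm j) with hx
  set y : Fin ℓ → Fin k := fun j => f.toFun (x j) with hy
  have hyval : ∀ j, y j = (e.symm j : Fin k) := fun j =>
    hPval _ (e.symm j).2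
  have hyinj : Function.Injective y := by
    intro j1 j2 hj
    rw [hyval, hyval] at hj
    exact e.symm.injective (Subtype.val_injective hj)
  have hxinj : Function.Injective x := by
    intro j1 j2 hj
    apply hyinj
    simp only [hy, hj]
  have hxdom : ∀ j, x j ∈ f.Dom := fun j => hPdom _ (e.symm j).2
  have hxy : x ≠ y := by
    intro hxy
    have hmem : f.toFun a ∈ V := hsV rfl
    set j0 := e ⟨f.toFun a, hmem⟩ with hj0
    have h1 : y j0 = f.toFun a := by
      rw [hyval]; simp [hj0]
    have h2 : x j0 = a := by
      have : (e.symm j0 : Fin k) = f.toFun a := by simp [hj0]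
      simp [hx, this, P]
    rw [← hxy] at h1
    rw [h2] at h1
    exact hfa h1.symm
  apply hanti x y hxinj hyinj hxy
  intro i hi
  obtain ⟨hisurj, hiρ⟩ := hi
  refine ⟨hisurj, ?_⟩
  have := hf (x ∘ i) hiρ (fun j => hxdom (i j))
  exact this
end

section
/- Let k ≥ 2 and 2 ≤ ℓ ≤ k. If there exists a non-empty h-ary hereditarily ℓ-rigid relation ρ on **k**, then k^{\underline{ℓ}} ≤ binom(s(h,ℓ), ⌊s(h,ℓ)/2⌋), where k^{\underline{ℓ}} = k(k−1)⋯(k−ℓ+1) is the falling factorial and s(h,ℓ) is the number of surjections from an h-element set onto an ℓ-element set. -/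
/-!
A rigid relation separates the `k^{underline ℓ}` injections `x : Fin ℓ ↪ Fin k`: for `x ≠ y` the
partial map `x j ↦ y j` lies outside `Ω_{<ℓ}(k)`, so it fails to preserve `ρ` on some tuple
`x ∘ i ∈ ρ`. Its restriction to the entries of that tuple still fails, so it must have `ℓ` image
points, i.e. `i` is surjective. Hence the sets `T_ρ^ℓ(x)` form an antichain of subsets of the
`s(h, ℓ)` surjections, and Sperner's theorem bounds its size.
-/

theorem Nat.card_le_choose_half_of_subset_imp_eq {ι α : Type*} [Finite ι] [Finite α]
    (F : ι → Set α) (hF : ∀ x y, F x ⊆ F y → x = y) :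
    Nat.card ι ≤ (Nat.card α).choose (Nat.card α / 2) := by
  classical
  have := Fintype.ofFinite ι
  have := Fintype.ofFinite α
  let G : ι → Finset α := fun x => (F x).toFinset
  have hG : ∀ x y, G x ⊆ G y → x = y := fun x y hxy => hF x y (Set.toFinset_subset_toFinset.mp hxy)
  have hanti : IsAntichain (· ⊆ ·) (SetLike.coe (Finset.univ.image G)) := by
    rw [Finset.coe_image, Finset.coe_univ, Set.image_univ]
    rintro _ ⟨x, rfl⟩ _ ⟨y, rfl⟩ hne hxy
    exact hne (congrArg G (hG x y hxy))
  have hinj : Function.Injective G := fun x y hxy => hG x y hxy.le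
  simpa only [Nat.card_eq_fintype_card, Finset.card_image_of_injective _ hinj, Finset.card_univ]
    using hanti.sperner

namespace HereditarilyRigid

variable {k h ℓ : ℕ} {ρ : Set (Fin h → Fin k)}

theorem preserves_iff (hrig : HereditarilyRigid h ℓ ρ) (f : PFun1 k) :
    Preserves1 f ρ ↔ f ∈ Omega k ℓ :=
  Set.ext_iff.mp hrig f

/-- The witness can be taken to hit `ℓ` image points: restricted to the entries of a witness with
fewer, `f` would lie in `Ω_{<ℓ}(k)` and preserve `ρ` on that same tuple. -/
theorem exists_not_preserved (hrig : HereditarilyRigid h ℓ ρ) {f : PFun1 k}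
    (hf : f ∉ Omega k ℓ) :
    ∃ M ∈ ρ, (∀ j, M j ∈ f.Dom) ∧ (fun j => f.toFun (M j)) ∉ ρ ∧
      ℓ ≤ (f.toFun '' Set.range M).ncard := by
  rw [← hrig.preserves_iff] at hf
  simp only [Preserves1, not_forall] at hf
  obtain ⟨M, hMρ, hMdom, hfM⟩ := hf
  refine ⟨M, hMρ, hMdom, hfM, not_lt.mp fun hlt => hfM ?_⟩
  have hrestrict : Preserves1 ⟨Set.range M, f.toFun⟩ ρ := (hrig.preserves_iff _).mpr (Or.inr hlt)
  exact hrestrict M hMρ fun j => ⟨j, rfl⟩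

theorem not_tset_subset (hrig : HereditarilyRigid h ℓ ρ) {x y : Fin ℓ ↪ Fin k} (hxy : x ≠ y) :
    ¬ Tset ℓ ρ x ⊆ Tset ℓ ρ y := by
  let f : PFun1 k := ⟨Set.range x, Function.extend x y id⟩
  have hfx : ∀ j, f.toFun (x j) = y j := x.injective.extend_apply y id
  have himage : f.toFun '' Set.range x = Set.range y := by
    rw [← Set.range_comp]
    exact congrArg Set.range (funext hfx)
  have hf : f ∉ Omega k ℓ := by
    rintro (hid | hsmall)
    · exact hxy (DFunLike.ext _ _ fun j => ((hfx j).symm.trans (hid _ ⟨j, rfl⟩)).symm)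
    · rw [himage, Set.ncard_range_of_injective y.injective, Nat.card_eq_fintype_card,
        Fintype.card_fin] at hsmall
      exact lt_irrefl ℓ hsmall
  obtain ⟨M, hMρ, hMdom, hfM, hcard⟩ := hrig.exists_not_preserved hf
  choose i hi using hMdom
  have hM : x ∘ i = M := funext hi
  have hfM' : f.toFun ∘ M = y ∘ i := funext fun j => by simp only [Function.comp_apply, ← hi, hfx]
  have hsurj : Function.Surjective i := by
    rw [← Set.range_eq_univ]
    refine Set.eq_of_subset_of_ncard_le (Set.subset_univ _) ?_
    calc Set.univ.ncard = ℓ := by rw [Set.ncard_univ, Nat.card_eq_fintype_card, Fintype.card_fin]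
      _ ≤ (f.toFun '' Set.range M).ncard := hcard
      _ = (Set.range i).ncard := by
        rw [← Set.range_comp, hfM', Set.range_comp, Set.ncard_image_of_injective _ y.injective]
  intro hsub
  apply hfM
  change f.toFun ∘ M ∈ ρ
  rw [hfM']
  exact (hsub ⟨hsurj, hM ▸ hMρ⟩).2

end HereditarilyRigid

theorem descFactorial_le_central_binom_of_hereditarilyRigid_general (k h ℓ : ℕ)
    (ρ : Set (Fin h → Fin k))
    (hrig : HereditarilyRigid h ℓ ρ) :
    Nat.descFactorial k ℓ ≤ Nat.choose (numSurj h ℓ) (numSurj h ℓ / 2) := by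
  let F : (Fin ℓ ↪ Fin k) → Set { i : Fin h → Fin ℓ // Function.Surjective i } :=
    fun x => { i | x ∘ i.1 ∈ ρ }
  have hF : ∀ x y, F x ⊆ F y → x = y := fun x y hxy => by_contra fun hne =>
    hrig.not_tset_subset hne fun i hi => ⟨hi.1, hxy (a := ⟨i, hi.1⟩) hi.2⟩
  simpa only [Nat.card_eq_fintype_card (α := Fin ℓ ↪ Fin k), Fintype.card_embedding_eq,
    Fintype.card_fin, numSurj] using Nat.card_le_choose_half_of_subset_imp_eq F hF

/-- If a non-empty `h`-ary hereditarily `ℓ`-rigid relation on `Fin k` exists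
(`2 ≤ ℓ ≤ k`), then `k^{underline ℓ} ≤ C(s(h,ℓ), ⌊s(h,ℓ)/2⌋)`. -/
theorem descFactorial_le_central_binom_of_hereditarilyRigid (k h ℓ : ℕ) (hk : 2 ≤ k)
    (hℓ2 : 2 ≤ ℓ) (hℓk : ℓ ≤ k) (ρ : Set (Fin h → Fin k)) (hρ : ρ.Nonempty)
    (hrig : HereditarilyRigid h ℓ ρ) :
    Nat.descFactorial k ℓ ≤ Nat.choose (numSurj h ℓ) (numSurj h ℓ / 2) :=
  descFactorial_le_central_binom_of_hereditarilyRigid_general k h ℓ ρ hrig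
end

section
/- Let k ≥ 2 and h ≥ 1. There exists a non-empty h-ary hereditarily 2-rigid relation on **k** if and only if k(k−1) ≤ binom(2^h − 2, 2^{h−1} − 1). -/
/-!
Ordered pairs of distinct elements of `Fin k` are embeddings `p : Fin 2 ↪ Fin k`, and the tuples
with entries in `{p 0, p 1}` using both are `p ∘ i` with `i : Fin h → Fin 2` surjective. A
non-empty relation `ρ` is hereditarily 2-rigid iff it contains the constant tuples and
`Tset 2 ρ p ⊄ Tset 2 ρ q` for `p ≠ q`: the partial map `p t ↦ q t` must not preserve `ρ`.
The `k(k-1)` sets `Tset 2 ρ p` then form an antichain of subsets of the `2^h - 2` surjections,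
and Sperner's theorem gives the bound.

Conversely, swapping the two values is a fixed-point-free involution both on pairs and on
surjections, hence on sets of `2^(h-1) - 1` surjections, since an invariant set has even size.
Under the bound there is an injective swap-equivariant choice `T p` of such sets; the constants
together with the tuples `p ∘ i`, `i ∈ T p`, form a relation with `Tset 2 ρ p = T p`, and sets
of equal size form an antichain.
-/

open Function

namespace Function.Involutive

variable {α β : Type*} {σ : α → α} {τ : β → β}

theorem exists_prod_bool_equiv (hσ : Involutive σ) (hfix : ∀ a, σ a ≠ a) :
    ∃ (K : Set α) (e : K × Bool ≃ α), ∀ x b, e (x, !b) = σ (e (x, b)) := by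
  classical
  let _ : LinearOrder α := linearOrderOfSTO WellOrderingRel
  refine ⟨{a | a < σ a}, Equiv.ofBijective (fun xb => bif xb.2 then σ xb.1 else xb.1) ⟨?_, ?_⟩,
    ?_⟩
  · rintro ⟨⟨x, hx⟩, _ | _⟩ ⟨⟨y, hy⟩, _ | _⟩ hxy <;>
      simp only [Set.mem_ofPred_eq, cond_false, cond_true] at hx hy hxy
    · simp [hxy]
    · subst hxy; rw [hσ] at hx; exact absurd hx hy.not_gt
    · subst hxy; rw [hσ] at hy; exact absurd hy hx.not_gt
    · simp [hσ.injective hxy]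
  · intro a
    rcases (hfix a).lt_or_gt with ha | ha
    · exact ⟨(⟨σ a, by simpa [hσ a] using ha⟩, true), hσ a⟩
    · exact ⟨(⟨a, ha⟩, false), rfl⟩
  · rintro x (_ | _)
    exacts [rfl, (hσ _).symm]

theorem even_natCard (hσ : Involutive σ) (hfix : ∀ a, σ a ≠ a) : Even (Nat.card α) := by
  obtain ⟨K, e, -⟩ := hσ.exists_prod_bool_equiv hfix
  rw [← Nat.card_congr e, Nat.card_prod, Nat.card_eq_fintype_card (α := Bool), Fintype.card_bool]
  exact even_two.mul_left _

theorem exists_injective_semiconj [Finite α] [Finite β] (hσ : Involutive σ)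
    (hσfix : ∀ a, σ a ≠ a) (hτ : Involutive τ) (hτfix : ∀ b, τ b ≠ b)
    (hcard : Nat.card α ≤ Nat.card β) : ∃ T : α → β, Injective T ∧ Semiconj T σ τ := by
  obtain ⟨K, e, he⟩ := hσ.exists_prod_bool_equiv hσfix
  obtain ⟨L, e', he'⟩ := hτ.exists_prod_bool_equiv hτfix
  have : Fintype K := Fintype.ofFinite K
  have : Fintype L := Fintype.ofFinite L
  obtain ⟨f⟩ : Nonempty (K ↪ L) := by
    refine Function.Embedding.nonempty_of_card_le ?_
    rw [← Nat.card_congr e, ← Nat.card_congr e', Nat.card_prod, Nat.card_prod] at hcard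
    simpa [Nat.card_eq_fintype_card] using hcard
  refine ⟨e' ∘ Prod.map f id ∘ e.symm, e'.injective.comp ((f.injective.prodMap injective_id).comp
    e.symm.injective), fun a => ?_⟩
  obtain ⟨⟨x, b⟩, rfl⟩ := e.surjective a
  simp [← he, he']

end Function.Involutive

theorem Finset.even_card_of_involutive {α : Type*} {σ : α → α} (hσ : Involutive σ)
    (hfix : ∀ a, σ a ≠ a) {A : Finset α} (hA : ∀ a ∈ A, σ a ∈ A) : Even A.card := by
  have hσA : Involutive fun a : A => (⟨σ a, hA a a.2⟩ : A) := fun a => Subtype.ext (hσ a)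
  simpa using hσA.even_natCard fun a h => hfix a (congrArg Subtype.val h)

section FinTwo

variable {ι β : Type*}

theorem exists_forall_eq_of_not_surjective_fin_two {i : ι → Fin 2} (hi : ¬ Surjective i) :
    ∃ t, ∀ j, i j = t := by
  obtain ⟨t, ht⟩ := not_forall.1 hi
  exact ⟨Fin.rev t, fun j => (by decide : ∀ x t : Fin 2, x ≠ t → x = Fin.rev t) _ _
    fun h => ht ⟨j, h⟩⟩

theorem card_surjective_fin_two [Fintype ι] [DecidableEq ι] :
    Fintype.card {i : ι → Fin 2 // Surjective i} = 2 ^ Fintype.card ι - 2 := by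
  rcases isEmpty_or_nonempty ι with hι | hι
  · have : IsEmpty {i : ι → Fin 2 // Surjective i} :=
      ⟨fun i => isEmptyElim (i.2 0).choose⟩
    simp
  · have hconst (t : Fin 2) : ¬ Surjective fun _ : ι => t := fun hs => by
      obtain ⟨j, hj⟩ := hs (Fin.rev t)
      exact (by decide : ∀ t : Fin 2, t ≠ Fin.rev t) t hj
    have hnot : Fintype.card {i : ι → Fin 2 // ¬ Surjective i} = 2 := by
      rw [← Fintype.card_fin 2]
      refine Fintype.card_congr (Equiv.ofBijective (fun t => ⟨fun _ => t, hconst t⟩) ⟨?_, ?_⟩).symm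
      · intro s t hst
        exact congrFun (congrArg Subtype.val hst) (Classical.arbitrary ι)
      · rintro ⟨i, hi⟩
        obtain ⟨t, ht⟩ := exists_forall_eq_of_not_surjective_fin_two hi
        exact ⟨t, Subtype.ext (funext fun j => (ht j).symm)⟩
    rw [Fintype.card_subtype_compl] at hnot
    simp only [Fintype.card_pi, Fintype.card_fin, Finset.prod_const, Finset.card_univ] at hnot
    omega

theorem card_embedding_fin_two [Fintype β] :
    Fintype.card (Fin 2 ↪ β) = Fintype.card β * (Fintype.card β - 1) := by
  rw [Fintype.card_embedding_eq, Fintype.card_fin, Nat.descFactorial_succ, Nat.descFactorial_one,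
    mul_comm]

def Function.Embedding.finTwoSwap (p : Fin 2 ↪ β) : Fin 2 ↪ β := Fin.revPerm.toEmbedding.trans p

theorem Function.Embedding.finTwoSwap_involutive :
    Involutive (Function.Embedding.finTwoSwap (β := β)) := fun p => by
  ext t; simp [Function.Embedding.finTwoSwap]

theorem Function.Embedding.finTwoSwap_ne_self (p : Fin 2 ↪ β) : p.finTwoSwap ≠ p := fun h => by
  have := DFunLike.congr_fun h 0
  simp [Function.Embedding.finTwoSwap] at this

def revSurj (i : {i : ι → Fin 2 // Surjective i}) : {i : ι → Fin 2 // Surjective i} :=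
  ⟨Fin.rev ∘ i.1, Fin.rev_surjective.comp i.2⟩

theorem revSurj_involutive : Involutive (revSurj (ι := ι)) := fun i =>
  Subtype.ext (funext fun j => Fin.rev_rev (i.1 j))

theorem revSurj_ne_self (i : {i : ι → Fin 2 // Surjective i}) : revSurj i ≠ i := fun h => by
  obtain ⟨j, hj⟩ := i.2 0
  have := congrFun (congrArg Subtype.val h) j
  simp [revSurj, hj] at this

theorem eq_or_eq_finTwoSwap_of_comp_eq {p q : Fin 2 ↪ β} {i i' : ι → Fin 2} (hi : Surjective i)
    (h : p ∘ i = q ∘ i') : (q = p ∧ i' = i) ∨ (q = p.finTwoSwap ∧ i' = Fin.rev ∘ i) := by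
  set π := i' ∘ surjInv hi
  have hqπ : ∀ t, q (π t) = p t := fun t => by
    simpa [π, surjInv_eq hi t] using (congrFun h (surjInv hi t)).symm
  have hi' : i' = π ∘ i := funext fun j => q.injective <| by
    simpa [hqπ] using (congrFun h j).symm
  have hπ : Injective π := fun s t hst => p.injective <| by rw [← hqπ, ← hqπ, hst]
  rcases (by decide : ∀ π : Fin 2 → Fin 2, Injective π → π = id ∨ π = Fin.rev) π hπ with hid | hrev
  · refine .inl ⟨?_, by rw [hi', hid]; rfl⟩
    ext t; simpa [hid] using hqπ t
  · refine .inr ⟨?_, by rw [hi', hrev]⟩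
    ext t; simpa [hrev, Function.Embedding.finTwoSwap] using hqπ (Fin.rev t)

end FinTwo

section Rigidity

variable {k h : ℕ} {ρ : Set (Fin h → Fin k)}

theorem omega_subset_pPol1_iff (hρ : ρ.Nonempty) :
    Omega k 2 ⊆ pPol1 h ρ ↔ ∀ c, (fun _ => c) ∈ ρ := by
  obtain ⟨w₀, hw₀⟩ := hρ
  refine ⟨fun hΩ c => hΩ (a := ⟨Set.univ, fun _ => c⟩) (Or.inr ?_) w₀ hw₀ fun _ => trivial,
    fun hconst f hf w hw hdom => ?_⟩
  · refine (Set.ncard_le_one_iff_subsingleton.2 ?_).trans_lt one_lt_two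
    rintro _ ⟨_, -, rfl⟩ _ ⟨_, -, rfl⟩
    rfl
  rcases hf with hid | hcard
  · simpa [hid _ (hdom _)] using hw
  rcases isEmpty_or_nonempty (Fin h) with _ | ⟨⟨j₀⟩⟩
  · simpa [Subsingleton.elim _ w] using hw
  · convert hconst (f.toFun (w j₀)) using 1
    have hsingle := (Set.ncard_le_one (s := f.toFun '' f.Dom) (Set.toFinite _)).1 (by omega)
    exact funext fun j => hsingle _ ⟨_, hdom j, rfl⟩ _ ⟨_, hdom j₀, rfl⟩

theorem Tset_not_subset_of_pPol1_subset_omega (hconst : ∀ c, (fun _ => c) ∈ ρ)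
    (hpPol : pPol1 h ρ ⊆ Omega k 2) {p q : Fin 2 ↪ Fin k} (hpq : p ≠ q) :
    ¬ Tset 2 ρ p ⊆ Tset 2 ρ q := by
  let f : PFun1 k := ⟨Set.range p, fun z => if z = p 0 then q 0 else q 1⟩
  have hf (t : Fin 2) : f.toFun (p t) = q t := by
    fin_cases t
    · simp [f]
    · simp [f, p.injective.ne Fin.zero_ne_one.symm]
  have hfΩ : f ∉ Omega k 2 := by
    rintro (hid | hcard)
    · exact hpq (DFunLike.ext _ _ fun t => by simpa [hf] using (hid (p t) ⟨t, rfl⟩).symm)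
    · have : f.toFun '' Set.range p = Set.range q := by
        rw [← Set.range_comp]; exact congrArg Set.range (funext hf)
      rw [this, Set.ncard_range_of_injective q.injective] at hcard
      simp at hcard
  have : ¬ Preserves1 f ρ := fun hpres => hfΩ (hpPol hpres)
  simp only [Preserves1, not_forall] at this
  obtain ⟨w, hw, hdom, hfw⟩ := this
  choose i hi using hdom
  have hw' : p ∘ i = w := funext hi
  have hfw' : (fun j => f.toFun (w j)) = q ∘ i := funext fun j => by simp [← hi, hf]
  rw [hfw'] at hfw
  have hsurj : Surjective i := by
    by_contra hns
    obtain ⟨t, ht⟩ := exists_forall_eq_of_not_surjective_fin_two hns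
    exact hfw (by simpa [Function.comp_def, ht] using hconst (q t))
  exact fun hsub => hfw (hsub ⟨hsurj, hw' ▸ hw⟩).2

theorem pPol1_subset_omega_of_Tset_not_subset
    (hT : ∀ p q : Fin 2 ↪ Fin k, p ≠ q → ¬ Tset 2 ρ p ⊆ Tset 2 ρ q) :
    pPol1 h ρ ⊆ Omega k 2 := by
  intro f hfρ
  by_contra hfΩ
  simp only [Omega, Set.mem_ofPred_eq, not_or, not_forall, not_lt] at hfΩ
  obtain ⟨⟨a, ha, hfa⟩, hcard⟩ := hfΩ
  obtain ⟨_, ⟨b, hb, rfl⟩, hfb⟩ := Set.exists_ne_of_one_lt_ncard hcard (f.toFun a)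
  have hab : a ≠ b := by rintro rfl; exact hfb rfl
  let p := Function.Embedding.embFinTwo hab
  let q := Function.Embedding.embFinTwo (Ne.symm hfb)
  have hf (t : Fin 2) : f.toFun (p t) = q t := by fin_cases t <;> rfl
  have hpq : p ≠ q := fun h => hfa (DFunLike.congr_fun h 0).symm
  refine hT p q hpq fun i ⟨hi, hpi⟩ => ⟨hi, ?_⟩
  have hdom (j) : (p ∘ i) j ∈ f.Dom := by
    obtain h | h : i j = 0 ∨ i j = 1 := by omega
    · rwa [Function.comp_apply, h]
    · rwa [Function.comp_apply, h]
  simpa [Function.comp_def, hf] using hfρ (p ∘ i) hpi hdom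

theorem hereditarilyRigid_two_iff (hρ : ρ.Nonempty) :
    HereditarilyRigid h 2 ρ ↔ (∀ c, (fun _ => c) ∈ ρ) ∧
      ∀ p q : Fin 2 ↪ Fin k, p ≠ q → ¬ Tset 2 ρ p ⊆ Tset 2 ρ q := by
  rw [HereditarilyRigid, Set.Subset.antisymm_iff, and_comm, omega_subset_pPol1_iff hρ]
  exact and_congr_right fun hconst =>
    ⟨fun hpPol _ _ => Tset_not_subset_of_pPol1_subset_omega hconst hpPol,
      pPol1_subset_omega_of_Tset_not_subset⟩

end Rigidity

theorem card_le_choose_of_forall_not_subset {ι α : Type*} [Fintype ι] [Fintype α]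
    (S : ι → Finset α) (hS : ∀ p q, p ≠ q → ¬ S p ⊆ S q) :
    Fintype.card ι ≤ (Fintype.card α).choose (Fintype.card α / 2) := by
  classical
  have hinj : Injective S := fun p q hpq => by_contra fun hne => hS p q hne hpq.subset
  calc Fintype.card ι = (Finset.univ.image S).card := (Finset.card_image_of_injective _ hinj).symm
    _ ≤ _ := IsAntichain.sperner ?_
  rintro _ hA _ hB hne hsub
  obtain ⟨p, -, rfl⟩ := Finset.mem_image.1 hA
  obtain ⟨q, -, rfl⟩ := Finset.mem_image.1 hB
  exact hS p q (fun h => hne (h ▸ rfl)) hsub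

theorem two_pow_sub_two_div_two (h : ℕ) : (2 ^ h - 2) / 2 = 2 ^ (h - 1) - 1 := by
  cases h with
  | zero => rfl
  | succ n => rw [pow_succ, Nat.add_sub_cancel]; omega

theorem mul_pred_le_choose_of_hereditarilyRigid {k h : ℕ} {ρ : Set (Fin h → Fin k)}
    (hρ : ρ.Nonempty) (hrig : HereditarilyRigid h 2 ρ) :
    k * (k - 1) ≤ (2 ^ h - 2).choose (2 ^ (h - 1) - 1) := by
  classical
  obtain ⟨-, hT⟩ := (hereditarilyRigid_two_iff hρ).1 hrig
  let S (p : Fin 2 ↪ Fin k) : Finset {i : Fin h → Fin 2 // Surjective i} :=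
    {i | i.1 ∈ Tset 2 ρ p}
  have hS (p q) (hpq : p ≠ q) : ¬ S p ⊆ S q := fun hsub =>
    hT p q hpq fun i hi => by simpa [S] using hsub (x := ⟨i, hi.1⟩) (by simpa [S] using hi)
  have := card_le_choose_of_forall_not_subset S hS
  rwa [card_embedding_fin_two, card_surjective_fin_two, Fintype.card_fin, Fintype.card_fin,
    two_pow_sub_two_div_two] at this

def relOfFamily {k h : ℕ} (T : (Fin 2 ↪ Fin k) → Finset {i : Fin h → Fin 2 // Surjective i}) :
    Set (Fin h → Fin k) :=
  {w | (∃ c, w = fun _ => c) ∨ ∃ p, ∃ i ∈ T p, w = p ∘ i.1}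

theorem Tset_relOfFamily {k h : ℕ}
    {T : (Fin 2 ↪ Fin k) → Finset {i : Fin h → Fin 2 // Surjective i}}
    (hT : ∀ p, T p.finTwoSwap = (T p).image revSurj) (p : Fin 2 ↪ Fin k) :
    Tset 2 (relOfFamily T) p =
      Subtype.val '' (↑(T p) : Set {i : Fin h → Fin 2 // Surjective i}) := by
  ext i
  constructor
  · rintro ⟨hi, ⟨c, hc⟩ | ⟨q, i', hi', heq⟩⟩
    · obtain ⟨j₀, hj₀⟩ := hi 0
      obtain ⟨j₁, hj₁⟩ := hi 1
      have := (congrFun hc j₀).trans (congrFun hc j₁).symm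
      simp [hj₀, hj₁] at this
    · rcases eq_or_eq_finTwoSwap_of_comp_eq hi heq with ⟨rfl, hii⟩ | ⟨rfl, hii⟩
      · exact ⟨i', hi', hii⟩
      · rw [hT, Finset.mem_image] at hi'
        obtain ⟨i'', hi'', rfl⟩ := hi'
        refine ⟨i'', hi'', ?_⟩
        simpa [revSurj, Function.comp_def] using congrArg (Fin.rev ∘ ·) hii
  · rintro ⟨i, hi, rfl⟩
    exact ⟨i.2, .inr ⟨p, i, hi, rfl⟩⟩

theorem exists_injective_finTwoSwap_equivariant_family {k h : ℕ} (hh : 2 ≤ h)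
    (hineq : k * (k - 1) ≤ (2 ^ h - 2).choose (2 ^ (h - 1) - 1)) :
    ∃ T : (Fin 2 ↪ Fin k) → Finset {i : Fin h → Fin 2 // Surjective i}, Injective T ∧
      (∀ p, (T p).card = 2 ^ (h - 1) - 1) ∧ ∀ p, T p.finTwoSwap = (T p).image revSurj := by
  classical
  have hm : Odd (2 ^ (h - 1) - 1) :=
    Nat.Even.sub_odd Nat.one_le_two_pow (Nat.even_pow.2 ⟨even_two, by omega⟩) odd_one
  set m := 2 ^ (h - 1) - 1
  let τ (A : {A : Finset {i : Fin h → Fin 2 // Surjective i} // A.card = m}) :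
      {A : Finset {i : Fin h → Fin 2 // Surjective i} // A.card = m} :=
    ⟨A.1.image revSurj, by rw [Finset.card_image_of_injective _ revSurj_involutive.injective, A.2]⟩
  have hτ : Involutive τ := fun A => Subtype.ext <| by
    simp [τ, Finset.image_image, revSurj_involutive.comp_self]
  have hτfix (A) : τ A ≠ A := fun hA => Nat.not_even_iff_odd.2 hm <| A.2 ▸
    Finset.even_card_of_involutive revSurj_involutive revSurj_ne_self fun a ha =>
      congrArg Subtype.val hA ▸ Finset.mem_image_of_mem _ ha
  obtain ⟨T, hinj, hsemi⟩ :=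
    (Function.Embedding.finTwoSwap_involutive (β := Fin k)).exists_injective_semiconj
      Function.Embedding.finTwoSwap_ne_self hτ hτfix <| by
        rwa [Nat.card_eq_fintype_card, Nat.card_eq_fintype_card, card_embedding_fin_two,
          Fintype.card_finset_len, card_surjective_fin_two, Fintype.card_fin, Fintype.card_fin]
  exact ⟨fun p => (T p).1, fun p q hpq => hinj (Subtype.ext hpq), fun p => (T p).2,
    fun p => congrArg Subtype.val (hsemi p)⟩

theorem exists_hereditarilyRigid_of_le_choose {k h : ℕ} (hk : 2 ≤ k)
    (hineq : k * (k - 1) ≤ (2 ^ h - 2).choose (2 ^ (h - 1) - 1)) :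
    ∃ ρ : Set (Fin h → Fin k), ρ.Nonempty ∧ HereditarilyRigid h 2 ρ := by
  have hh : 2 ≤ h := by
    by_contra! hh
    have hone : (2 ^ h - 2).choose (2 ^ (h - 1) - 1) = 1 := by interval_cases h <;> rfl
    have := Nat.mul_le_mul hk (show 1 ≤ k - 1 by omega)
    omega
  obtain ⟨T, hinj, hcard, hswap⟩ := exists_injective_finTwoSwap_equivariant_family hh hineq
  have hρ : (relOfFamily T).Nonempty := ⟨fun _ => ⟨0, by omega⟩, .inl ⟨_, rfl⟩⟩
  refine ⟨relOfFamily T, hρ, (hereditarilyRigid_two_iff hρ).2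
    ⟨fun c => .inl ⟨c, rfl⟩, fun p q hpq hsub => hpq (hinj ?_)⟩⟩
  rw [Tset_relOfFamily hswap, Tset_relOfFamily hswap,
    Set.image_subset_image_iff Subtype.val_injective, Finset.coe_subset] at hsub
  exact Finset.eq_of_subset_of_card_le hsub (by rw [hcard, hcard])

theorem exists_hereditarilyTwoRigid_iff_general (k h : ℕ) (hk : 2 ≤ k) :
    (∃ ρ : Set (Fin h → Fin k), ρ.Nonempty ∧ HereditarilyRigid h 2 ρ) ↔
      k * (k - 1) ≤ Nat.choose (2 ^ h - 2) (2 ^ (h - 1) - 1) :=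
  ⟨fun ⟨_, hρ, hrig⟩ => mul_pred_le_choose_of_hereditarilyRigid hρ hrig,
    exists_hereditarilyRigid_of_le_choose hk⟩

/-- For `k ≥ 2`, `h ≥ 1`, a non-empty `h`-ary hereditarily 2-rigid relation
on `Fin k` exists iff `k(k-1) ≤ C(2^h - 2, 2^(h-1) - 1)`. -/
theorem exists_hereditarilyTwoRigid_iff (k h : ℕ) (hk : 2 ≤ k) (hh : 1 ≤ h) :
    (∃ ρ : Set (Fin h → Fin k), ρ.Nonempty ∧ HereditarilyRigid h 2 ρ) ↔
      k * (k - 1) ≤ Nat.choose (2 ^ h - 2) (2 ^ (h - 1) - 1) :=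
  exists_hereditarilyTwoRigid_iff_general k h hk
end

section
/- Let k, ℓ, h be integers with 2 ≤ ℓ ≤ k and ℓ < h. If k^{\underline{ℓ}} ≤ binom(s(h,ℓ) − ℓ!, ⌊(s(h,ℓ) − ℓ!)/2⌋), then there exists a non-empty h-ary hereditarily ℓ-rigid relation on **k**, where k^{\underline{ℓ}} = k(k−1)⋯(k−ℓ+1) and s(h,ℓ) is the number of surjections from an h-element set onto an ℓ-element set. -/
open Function Finset
open scoped Classical

noncomputable section AuxRigid

variable (k ℓ h : ℕ)

/-- canonical enumeration of an `ℓ`-subset of `Fin k` -/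
def cEnum (A : {A : Finset (Fin k) // A.card = ℓ}) : Fin ℓ → Fin k :=
  A.1.orderEmbOfFin A.2

lemma cEnum_injective (A : {A : Finset (Fin k) // A.card = ℓ}) :
    Injective (cEnum k ℓ A) := (A.1.orderEmbOfFin A.2).injective

lemma range_cEnum (A : {A : Finset (Fin k) // A.card = ℓ}) :
    Set.range (cEnum k ℓ A) = ↑A.1 := A.1.range_orderEmbOfFin A.2

/-- a fixed surjection `Fin h → Fin ℓ` -/
def iZero (hpos : 0 < ℓ) : Fin h → Fin ℓ :=
  fun j => if hj : j.val < ℓ then ⟨j.val, hj⟩ else ⟨0, hpos⟩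

lemma iZero_surjective (hpos : 0 < ℓ) (hlh : ℓ ≤ h) : Surjective (iZero ℓ h hpos) := by
  intro t
  refine ⟨⟨t.val, lt_of_lt_of_le t.isLt hlh⟩, ?_⟩
  simp [iZero, t.isLt]

/-- decomposition of an injective map as canonical enumeration composed with a permutation -/
lemma exists_decomp (x : Fin ℓ → Fin k) (hx : Injective x) :
    ∃ (A : {A : Finset (Fin k) // A.card = ℓ}) (σ : Equiv.Perm (Fin ℓ)),
      x = cEnum k ℓ A ∘ ⇑σ := by
  have hA : (Finset.univ.image x).card = ℓ := by
    rw [Finset.card_image_of_injective _ hx, Finset.card_univ, Fintype.card_fin]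
  set A : {A : Finset (Fin k) // A.card = ℓ} := ⟨Finset.univ.image x, hA⟩ with hAdef
  have hmem : ∀ j, x j ∈ A.1 := fun j => Finset.mem_image_of_mem x (Finset.mem_univ j)
  set x' : Fin ℓ → ↥A.1 := fun j => ⟨x j, hmem j⟩ with hx'
  have hinj : Injective x' := fun a b hab => hx (congrArg Subtype.val hab)
  have hbij : Bijective x' := by
    rw [Fintype.bijective_iff_injective_and_card]
    refine ⟨hinj, ?_⟩
    rw [Fintype.card_fin, Fintype.card_coe]
    exact A.2.symm
  set e : Fin ℓ ≃ ↥A.1 := Equiv.ofBijective x' hbij with he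
  set σ : Equiv.Perm (Fin ℓ) := e.trans (A.1.orderIsoOfFin A.2).toEquiv.symm with hσ
  refine ⟨A, σ, funext fun j => ?_⟩
  have h1 : cEnum k ℓ A (σ j) = ((A.1.orderIsoOfFin A.2) (σ j) : Fin k) := by
    rw [cEnum, ← Finset.coe_orderIsoOfFin_apply]
  have h2 : (A.1.orderIsoOfFin A.2) (σ j) = x' j := by
    simp [hσ, he]
  simp [Function.comp, h1, h2, hx']

/-- the finset of surjections -/
def surjFS : Finset (Fin h → Fin ℓ) := Finset.univ.filter Function.Surjective

lemma numSurj_eq : numSurj h ℓ = (surjFS ℓ h).card := by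
  rw [numSurj, Nat.card_eq_fintype_card, Fintype.card_subtype, surjFS]

/-- the orbit of `iZero` under postcomposition by permutations -/
def orbZero (hpos : 0 < ℓ) : Finset (Fin h → Fin ℓ) :=
  Finset.univ.image (fun σ : Equiv.Perm (Fin ℓ) => ⇑σ ∘ iZero ℓ h hpos)

lemma comp_iZero_injective (hpos : 0 < ℓ) (hlh : ℓ ≤ h) :
    Injective (fun σ : Equiv.Perm (Fin ℓ) => ⇑σ ∘ iZero ℓ h hpos) := by
  intro σ τ hst
  apply Equiv.ext
  intro t
  obtain ⟨j, rfl⟩ := iZero_surjective ℓ h hpos hlh t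
  exact congrFun hst j

lemma orbZero_subset (hpos : 0 < ℓ) (hlh : ℓ ≤ h) : orbZero ℓ h hpos ⊆ surjFS ℓ h := by
  intro i hi
  rw [orbZero, Finset.mem_image] at hi
  obtain ⟨σ, _, rfl⟩ := hi
  rw [surjFS, Finset.mem_filter]
  exact ⟨Finset.mem_univ _, σ.surjective.comp (iZero_surjective ℓ h hpos hlh)⟩

lemma iZero_mem_orbZero (hpos : 0 < ℓ) : iZero ℓ h hpos ∈ orbZero ℓ h hpos := by
  rw [orbZero, Finset.mem_image]
  exact ⟨Equiv.refl _, Finset.mem_univ _, rfl⟩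

lemma card_orbZero (hpos : 0 < ℓ) (hlh : ℓ ≤ h) :
    (orbZero ℓ h hpos).card = Nat.factorial ℓ := by
  rw [orbZero, Finset.card_image_of_injective _ (comp_iZero_injective ℓ h hpos hlh),
    Finset.card_univ, Fintype.card_perm, Fintype.card_fin]

/-- the surjections outside the orbit of `iZero` -/
def restFS (hpos : 0 < ℓ) : Finset (Fin h → Fin ℓ) := surjFS ℓ h \ orbZero ℓ h hpos

lemma card_restFS (hpos : 0 < ℓ) (hlh : ℓ ≤ h) :
    (restFS ℓ h hpos).card = numSurj h ℓ - Nat.factorial ℓ := by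
  rw [restFS, Finset.card_sdiff_of_subset (orbZero_subset ℓ h hpos hlh), card_orbZero ℓ h hpos hlh,
    numSurj_eq]

lemma mem_restFS (hpos : 0 < ℓ) {j : Fin h → Fin ℓ} (hj : j ∈ restFS ℓ h hpos) :
    Surjective j ∧ j ∉ orbZero ℓ h hpos := by
  rw [restFS, Finset.mem_sdiff, surjFS, Finset.mem_filter] at hj
  exact ⟨hj.1.2, hj.2⟩

/-- the ℓ-image part of the relation -/
def rhoPart (hpos : 0 < ℓ)
    (Φ : {A : Finset (Fin k) // A.card = ℓ} → Finset (Fin h → Fin ℓ)) :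
    Set (Fin h → Fin k) :=
  {M | ∃ A : {A : Finset (Fin k) // A.card = ℓ}, ∃ j : Fin h → Fin ℓ,
    (j = iZero ℓ h hpos ∨ j ∈ Φ A) ∧ M = cEnum k ℓ A ∘ j}

/-- the full relation -/
def rhoRel (hpos : 0 < ℓ)
    (Φ : {A : Finset (Fin k) // A.card = ℓ} → Finset (Fin h → Fin ℓ)) :
    Set (Fin h → Fin k) :=
  {M | (Set.range M).ncard < ℓ} ∪ rhoPart k ℓ h hpos Φ

lemma comp_mem_part_iff (hpos : 0 < ℓ) (hlh : ℓ ≤ h)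
    (Φ : {A : Finset (Fin k) // A.card = ℓ} → Finset (Fin h → Fin ℓ))
    (hΦsub : ∀ A, Φ A ⊆ restFS ℓ h hpos)
    (A : {A : Finset (Fin k) // A.card = ℓ}) (σ : Equiv.Perm (Fin ℓ))
    (i : Fin h → Fin ℓ) (hi : Surjective i) :
    (cEnum k ℓ A ∘ ⇑σ) ∘ i ∈ rhoPart k ℓ h hpos Φ ↔
      (⇑σ ∘ i = iZero ℓ h hpos ∨ ⇑σ ∘ i ∈ Φ A) := by
  constructor
  · rintro ⟨B, jj, hjj, heq⟩
    have hjjsurj : Surjective jj := by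
      rcases hjj with rfl | hjj
      · exact iZero_surjective ℓ h hpos hlh
      · exact (mem_restFS ℓ h hpos (hΦsub B hjj)).1
    have hσi : Surjective (⇑σ ∘ i) := σ.surjective.comp hi
    have hAB : A = B := by
      have hr1 : Set.range ((cEnum k ℓ A ∘ ⇑σ) ∘ i) = ↑A.1 := by
        rw [Function.comp_assoc, Set.range_comp, hσi.range_eq, Set.image_univ, range_cEnum]
      have hr2 : Set.range (cEnum k ℓ B ∘ jj) = ↑B.1 := by
        rw [Set.range_comp, hjjsurj.range_eq, Set.image_univ, range_cEnum]
      apply Subtype.ext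
      apply Finset.coe_injective
      rw [← hr1, ← hr2, heq]
    subst hAB
    have hcancel : ⇑σ ∘ i = jj := by
      funext t
      exact cEnum_injective k ℓ A (congrFun heq t)
    rw [hcancel]
    exact hjj
  · intro hcase
    exact ⟨A, ⇑σ ∘ i, hcase, rfl⟩

lemma ncard_range_comp (u : Fin ℓ → Fin k) (hu : Injective u)
    {i : Fin h → Fin ℓ} (hi : Surjective i) :
    (Set.range (u ∘ i)).ncard = ℓ := by
  rw [Set.range_comp, hi.range_eq, Set.image_univ]
  have h1 := Set.ncard_image_of_injective (Set.univ : Set (Fin ℓ)) hu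
  rw [Set.image_univ] at h1
  rw [h1, Set.ncard_univ, Nat.card_eq_fintype_card, Fintype.card_fin]

lemma separation (hpos : 0 < ℓ) (hlh : ℓ ≤ h)
    (Φ : {A : Finset (Fin k) // A.card = ℓ} → Finset (Fin h → Fin ℓ))
    (hΦsub : ∀ A, Φ A ⊆ restFS ℓ h hpos) (m : ℕ) (hΦcard : ∀ A, (Φ A).card = m)
    (hΦinj : Injective Φ)
    (u v : Fin ℓ → Fin k) (hu : Injective u) (hv : Injective v) (huv : u ≠ v) :
    ∃ i : Fin h → Fin ℓ, Surjective i ∧ u ∘ i ∈ rhoRel k ℓ h hpos Φ ∧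
      v ∘ i ∉ rhoRel k ℓ h hpos Φ := by
  obtain ⟨A, σ, hdu⟩ := exists_decomp k ℓ u hu
  obtain ⟨B, τ, hdv⟩ := exists_decomp k ℓ v hv
  by_cases hστ : σ = τ
  · -- same permutation, different sets
    subst hστ
    have hAB : A ≠ B := by
      rintro rfl
      exact huv (hdu.trans hdv.symm)
    obtain ⟨j, hjA, hjB⟩ : ∃ j, j ∈ Φ A ∧ j ∉ Φ B := by
      by_contra hcon
      push_neg at hcon
      have hsub : Φ A ⊆ Φ B := fun j hj => hcon j hj
      have : Φ A = Φ B :=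
        Finset.eq_of_subset_of_card_le hsub (by rw [hΦcard, hΦcard])
      exact hAB (hΦinj this)
    obtain ⟨hjsurj, hjorb⟩ := mem_restFS ℓ h hpos (hΦsub A hjA)
    refine ⟨⇑σ.symm ∘ j, σ.symm.surjective.comp hjsurj, ?_, ?_⟩
    · right
      refine ⟨A, j, Or.inr hjA, ?_⟩
      rw [hdu]
      funext t
      simp
    · rintro (hsmall | hpart)
      · rw [Set.mem_setOf_eq, ncard_range_comp k ℓ h v hv (σ.symm.surjective.comp hjsurj)]
          at hsmall
        omega
      · rw [hdv] at hpart
        rw [comp_mem_part_iff k ℓ h hpos hlh Φ hΦsub B σ _ (σ.symm.surjective.comp hjsurj)]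
          at hpart
        have hj' : ⇑σ ∘ (⇑σ.symm ∘ j) = j := by funext t; simp
        rw [hj'] at hpart
        rcases hpart with hiz | hmem
        · subst hiz
          exact hjorb (iZero_mem_orbZero ℓ h hpos)
        · exact hjB hmem
  · -- different permutations
    refine ⟨⇑σ.symm ∘ iZero ℓ h hpos,
      σ.symm.surjective.comp (iZero_surjective ℓ h hpos hlh), ?_, ?_⟩
    · right
      refine ⟨A, iZero ℓ h hpos, Or.inl rfl, ?_⟩
      rw [hdu]
      funext t
      simp
    · rintro (hsmall | hpart)
      · rw [Set.mem_setOf_eq, ncard_range_comp k ℓ h v hv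
          (σ.symm.surjective.comp (iZero_surjective ℓ h hpos hlh))] at hsmall
        omega
      · rw [hdv] at hpart
        rw [comp_mem_part_iff k ℓ h hpos hlh Φ hΦsub B τ _
          (σ.symm.surjective.comp (iZero_surjective ℓ h hpos hlh))] at hpart
        have hkey : ⇑τ ∘ (⇑σ.symm ∘ iZero ℓ h hpos) = ⇑(σ.symm.trans τ) ∘ iZero ℓ h hpos := by
          funext t; simp
        rw [hkey] at hpart
        rcases hpart with hiz | hmem
        · -- forces τ = σ
          have : σ.symm.trans τ = Equiv.refl (Fin ℓ) := by
            apply comp_iZero_injective ℓ h hpos hlh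
            simpa using hiz
          apply hστ
          apply Equiv.ext
          intro t
          have := congrArg (fun e => e (σ t)) this
          simpa using this.symm
        · have : ⇑(σ.symm.trans τ) ∘ iZero ℓ h hpos ∈ orbZero ℓ h hpos :=
            Finset.mem_image_of_mem _ (Finset.mem_univ _)
          exact (mem_restFS ℓ h hpos (hΦsub B hmem)).2 this

end AuxRigid

noncomputable section AuxRigid2
open Function Finset
open scoped Classical

lemma exists_bad_pair (k ℓ : ℕ) (hpos : 0 < ℓ) (f : PFun1 k) (hf : f ∉ Omega k ℓ) :
    ∃ u : Fin ℓ → Fin k, Function.Injective u ∧ (∀ j, u j ∈ f.Dom) ∧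
      Function.Injective (f.toFun ∘ u) ∧ f.toFun ∘ u ≠ u := by
  rw [Omega, Set.mem_setOf_eq] at hf
  push_neg at hf
  obtain ⟨⟨a, haDom, hfa⟩, hcard⟩ := hf
  have hfin : (f.toFun '' f.Dom).Finite := Set.toFinite _
  set I : Finset (Fin k) := hfin.toFinset with hI
  have hIcard : ℓ ≤ I.card := by
    rw [← Set.ncard_eq_toFinset_card _ hfin]
    exact hcard
  have hfaI : f.toFun a ∈ I := by
    rw [hI, Set.Finite.mem_toFinset]
    exact ⟨a, haDom, rfl⟩
  have herase : (I.erase (f.toFun a)).card = I.card - 1 := Finset.card_erase_of_mem hfaI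
  obtain ⟨t, hts, htcard⟩ := Finset.exists_subset_card_eq
    (show ℓ - 1 ≤ (I.erase (f.toFun a)).card by omega)
  have hfat : f.toFun a ∉ t := fun hmem => Finset.notMem_erase _ _ (hts hmem)
  set T : Finset (Fin k) := insert (f.toFun a) t with hT
  have hTcard : T.card = ℓ := by
    rw [hT, Finset.card_insert_of_notMem hfat, htcard]
    omega
  have hTsub : T ⊆ I := by
    rw [hT]
    exact Finset.insert_subset hfaI (hts.trans (Finset.erase_subset _ _))
  set w : Fin ℓ → Fin k := ⇑(T.orderEmbOfFin hTcard) with hw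
  have hwinj : Function.Injective w := (T.orderEmbOfFin hTcard).injective
  have hwT : ∀ j, w j ∈ T := fun j => Finset.orderEmbOfFin_mem T hTcard j
  have hpre : ∀ j, ∃ b, b ∈ f.Dom ∧ f.toFun b = w j := by
    intro j
    have : w j ∈ I := hTsub (hwT j)
    rw [hI, Set.Finite.mem_toFinset] at this
    obtain ⟨b, hb, hfb⟩ := this
    exact ⟨b, hb, hfb⟩
  set u : Fin ℓ → Fin k := fun j =>
    if w j = f.toFun a then a else Classical.choose (hpre j) with hu
  have hudom : ∀ j, u j ∈ f.Dom := by
    intro j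
    by_cases hc : w j = f.toFun a
    · simp only [hu, if_pos hc]; exact haDom
    · simp only [hu, if_neg hc]; exact (Classical.choose_spec (hpre j)).1
  have hfu : ∀ j, f.toFun (u j) = w j := by
    intro j
    by_cases hc : w j = f.toFun a
    · simp only [hu, if_pos hc]; exact hc.symm
    · simp only [hu, if_neg hc]; exact (Classical.choose_spec (hpre j)).2
  have hcompw : f.toFun ∘ u = w := funext hfu
  have hcompinj : Function.Injective (f.toFun ∘ u) := by rw [hcompw]; exact hwinj
  have huinj : Function.Injective u := Function.Injective.of_comp hcompinj
  have hfaT : f.toFun a ∈ T := by rw [hT]; exact Finset.mem_insert_self _ _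
  obtain ⟨j₀, hj₀⟩ : ∃ j₀, w j₀ = f.toFun a := by
    have : (f.toFun a : Fin k) ∈ Set.range w := by
      rw [hw, Finset.range_orderEmbOfFin]
      exact hfaT
    exact this
  have huj₀ : u j₀ = a := by simp only [hu, if_pos hj₀]
  refine ⟨u, huinj, hudom, hcompinj, ?_⟩
  intro heq
  have h1 : f.toFun (u j₀) = u j₀ := congrFun heq j₀
  rw [huj₀] at h1
  exact hfa h1

end AuxRigid2

/-- For `2 ≤ ℓ ≤ k` and `ℓ < h`, if
`k^{underline ℓ} ≤ C(s(h,ℓ) - ℓ!, ⌊(s(h,ℓ) - ℓ!)/2⌋)`, then a non-empty `h`-ary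
hereditarily `ℓ`-rigid relation on `Fin k` exists. -/
theorem exists_hereditarilyRigid_of_bound (k ℓ h : ℕ) (hk : 2 ≤ k) (hℓ2 : 2 ≤ ℓ)
    (hℓk : ℓ ≤ k) (hℓh : ℓ < h)
    (hbound : Nat.descFactorial k ℓ ≤
      Nat.choose (numSurj h ℓ - Nat.factorial ℓ) ((numSurj h ℓ - Nat.factorial ℓ) / 2)) :
    ∃ ρ : Set (Fin h → Fin k), ρ.Nonempty ∧ HereditarilyRigid h ℓ ρ := by
  classical
  have hpos : 0 < ℓ := by omega
  have hlh : ℓ ≤ h := hℓh.le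
  set m : ℕ := (numSurj h ℓ - Nat.factorial ℓ) / 2 with hm
  -- obtain the injective assignment Φ of middle-layer subsets
  have hcard1 : Fintype.card {A : Finset (Fin k) // A.card = ℓ} = Nat.choose k ℓ := by
    rw [Fintype.card_finset_len, Fintype.card_fin]
  set P : Finset (Finset (Fin h → Fin ℓ)) := Finset.powersetCard m (restFS ℓ h hpos) with hP
  have hcard2 : Fintype.card ↥P = Nat.choose (numSurj h ℓ - Nat.factorial ℓ) m := by
    rw [Fintype.card_coe, hP, Finset.card_powersetCard, card_restFS ℓ h hpos hlh]
  have hchoose_le : Nat.choose k ℓ ≤ Nat.descFactorial k ℓ := by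
    rw [Nat.descFactorial_eq_factorial_mul_choose]
    exact Nat.le_mul_of_pos_left _ (Nat.factorial_pos ℓ)
  have hle : Fintype.card {A : Finset (Fin k) // A.card = ℓ} ≤ Fintype.card ↥P := by
    rw [hcard1, hcard2]
    exact le_trans hchoose_le hbound
  obtain ⟨e⟩ := Function.Embedding.nonempty_of_card_le hle
  set Φ : {A : Finset (Fin k) // A.card = ℓ} → Finset (Fin h → Fin ℓ) :=
    fun A => ↑(e A) with hΦ
  have hΦmem : ∀ A, (Φ A) ∈ P := fun A => (e A).2
  have hΦsub : ∀ A, Φ A ⊆ restFS ℓ h hpos := by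
    intro A
    have := hΦmem A
    rw [hP, Finset.mem_powersetCard] at this
    exact this.1
  have hΦcard : ∀ A, (Φ A).card = m := by
    intro A
    have := hΦmem A
    rw [hP, Finset.mem_powersetCard] at this
    exact this.2
  have hΦinj : Function.Injective Φ := by
    intro A B hAB
    exact e.injective (Subtype.ext hAB)
  refine ⟨rhoRel k ℓ h hpos Φ, ?_, ?_⟩
  · -- nonempty: the constant tuple
    refine ⟨fun _ => ⟨0, by omega⟩, Or.inl ?_⟩
    have hne : Nonempty (Fin h) := ⟨⟨0, by omega⟩⟩
    rw [Set.mem_setOf_eq, Set.range_const, Set.ncard_singleton]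
    omega
  · -- hereditary rigidity
    rw [HereditarilyRigid]
    ext f
    rw [pPol1, Set.mem_setOf_eq]
    constructor
    · -- preserving implies in Omega
      intro hpres
      by_contra hf
      obtain ⟨u, huinj, hudom, hvinj, hvu⟩ := exists_bad_pair k ℓ hpos f hf
      obtain ⟨i, hisurj, hmem, hnot⟩ := separation k ℓ h hpos hlh Φ hΦsub m hΦcard hΦinj
        u (f.toFun ∘ u) huinj hvinj (fun hequv => hvu hequv.symm)
      have hdom : ∀ t, (u ∘ i) t ∈ f.Dom := fun t => hudom (i t)
      have hres := hpres (u ∘ i) hmem hdom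
      exact hnot hres
    · -- Omega preserves
      rintro (hid | hsmall) M hM hdom
      · have : (fun t => f.toFun (M t)) = M := funext fun t => hid (M t) (hdom t)
        rw [this]
        exact hM
      · left
        rw [Set.mem_setOf_eq]
        have hsub : Set.range (fun t => f.toFun (M t)) ⊆ f.toFun '' f.Dom := by
          rintro y ⟨t, rfl⟩
          exact ⟨M t, hdom t, rfl⟩
        exact lt_of_le_of_lt (Set.ncard_le_ncard hsub (Set.toFinite _)) hsmall
end

section
/- Let k ≥ 2, n ≥ 3, and 1 ≤ h < n. There exists an n-ary partial function f on **k** that is neither a partial projection nor a partial constant function and that preserves every h-ary relation on **k**. -/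
/-!
Take two distinct values `o ≠ l` and `m = h + 1`. The domain consists of the `m` "spikes"
`sᵣ` (equal to `o` at coordinate `r < m` and to `l` elsewhere) together with the point `b`
equal to `o` on the first `m` coordinates and to `l` on the rest; put `f b = o` and `f sᵣ = l`.
On `b` and all spikes but `sᵣ`, `f` is the projection onto coordinate `r`, and any `h` points
of the domain miss some spike. So every `h`-row matrix is mapped by `f` to one of its own
columns, which is why `f` preserves every `h`-ary relation; yet `f` disagrees with the
projection onto `r` at `sᵣ` (for `r < m`) or at `b` (for `r ≥ m`).
-/

/-- An `n`-ary partial function on `Fin k`: a domain together with a value map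
(values outside the domain are irrelevant). -/
structure PFunN (k n : ℕ) where
  Dom : Set (Fin n → Fin k)
  toFun : (Fin n → Fin k) → Fin k

/-- An `n`-ary partial function `f` preserves the `h`-ary relation `ρ` if for every
`h × n` matrix `M` all of whose columns are in `ρ` and all of whose rows are in the
domain of `f`, the tuple of values of `f` on the rows belongs to `ρ`. -/
def PreservesN {k n h : ℕ} (f : PFunN k n) (ρ : Set (Fin h → Fin k)) : Prop :=
  ∀ M : Fin h → Fin n → Fin k,
    (∀ j : Fin n, (fun i => M i j) ∈ ρ) → (∀ i, M i ∈ f.Dom) →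
      (fun i => f.toFun (M i)) ∈ ρ

/-- `f` is a partial projection: a subfunction of some projection `e_i^n`. -/
def IsPartialProjection {k n : ℕ} (f : PFunN k n) : Prop :=
  ∃ i : Fin n, ∀ x ∈ f.Dom, f.toFun x = x i

/-- `f` is a partial constant function: it does not take two distinct values. -/
def IsPartialConstant {k n : ℕ} (f : PFunN k n) : Prop :=
  ∀ x ∈ f.Dom, ∀ y ∈ f.Dom, f.toFun x = f.toFun y

/-- The tuple `v_t^h ∈ 2^h` consisting of `t` ones followed by `h - t` zeros. -/
def vtuple (t h : ℕ) : Fin h → Fin 2 := fun i => if (i : ℕ) < t then 1 else 0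

/-- The relation `Δ_t^h = 2^h \ {v_t^h}`. -/
def Delta (t h : ℕ) : Set (Fin h → Fin 2) := { v | v ≠ vtuple t h }

open Function

def PFunN.IsLocallyPartialProjection {k n : ℕ} (h : ℕ) (f : PFunN k n) : Prop :=
  ∀ M : Fin h → Fin n → Fin k, (∀ i, M i ∈ f.Dom) → ∃ j, ∀ i, f.toFun (M i) = M i j

theorem PFunN.IsLocallyPartialProjection.preservesN {k n h : ℕ} {f : PFunN k n}
    (hf : f.IsLocallyPartialProjection h) (ρ : Set (Fin h → Fin k)) : PreservesN f ρ := by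
  intro M hcol hrow
  obtain ⟨j, hj⟩ := hf M hrow
  simpa only [hj] using hcol j

theorem exists_forall_ne_of_injective {β : Type*} {h m : ℕ} (hhm : h < m) {a : Fin m → β}
    (ha : Injective a) (M : Fin h → β) : ∃ r, ∀ i, M i ≠ a r := by
  by_contra! hcover
  choose g hg using hcover
  have hg_inj : Injective g := Injective.of_comp (f := M) (by simpa [comp_def, hg] using ha)
  have hcard := Fintype.card_le_of_injective g hg_inj
  simp only [Fintype.card_fin] at hcard
  omega

namespace SpikeFun

variable {k n m : ℕ} (o l : Fin k)

def spike (r : ℕ) : Fin n → Fin k := fun j => if (j : ℕ) = r then o else l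

def base (m : ℕ) : Fin n → Fin k := fun j => if (j : ℕ) < m then o else l

def spikeFun (m : ℕ) : PFunN k n where
  Dom := insert (base o l m) (Set.range fun r : Fin m => spike o l r)
  toFun z := if z = base o l m then o else l

variable {o l}

theorem spike_ne_base (hol : o ≠ l) (hm : 2 ≤ m) (hmn : m ≤ n) (r : ℕ) :
    (spike o l r : Fin n → Fin k) ≠ base o l m := by
  intro heq
  obtain ⟨s, hsm, hsr⟩ : ∃ s < m, s ≠ r :=
    ⟨if r = 0 then 1 else 0, by split_ifs <;> omega, by split_ifs <;> omega⟩
  have := congrFun heq ⟨s, by omega⟩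
  simp only [spike, base, if_neg hsr, if_pos hsm] at this
  exact hol this.symm

theorem spike_injective (hol : o ≠ l) (hmn : m ≤ n) :
    Injective fun r : Fin m => (spike o l r : Fin n → Fin k) := by
  intro r r' heq
  have := congrFun heq (Fin.castLE hmn r)
  simp only [spike, Fin.val_castLE, if_true] at this
  split_ifs at this with hrr'
  · exact Fin.ext hrr'
  · exact absurd this hol

theorem spikeFun_base : (spikeFun o l m).toFun (base o l m : Fin n → Fin k) = o := if_pos rfl

theorem spikeFun_spike (hol : o ≠ l) (hm : 2 ≤ m) (hmn : m ≤ n) (r : ℕ) :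
    (spikeFun o l m).toFun (spike o l r : Fin n → Fin k) = l :=
  if_neg (spike_ne_base hol hm hmn r)

theorem base_mem_dom : (base o l m : Fin n → Fin k) ∈ (spikeFun o l m).Dom :=
  Set.mem_insert _ _

theorem spike_mem_dom {r : ℕ} (hr : r < m) :
    (spike o l r : Fin n → Fin k) ∈ (spikeFun o l m).Dom :=
  Set.mem_insert_of_mem _ ⟨⟨r, hr⟩, rfl⟩

theorem isLocallyPartialProjection_spikeFun (hol : o ≠ l) (hm : 2 ≤ m) (hmn : m ≤ n) {h : ℕ}
    (hhm : h < m) : (spikeFun o l m : PFunN k n).IsLocallyPartialProjection h := by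
  intro M hrow
  obtain ⟨r, hr⟩ := exists_forall_ne_of_injective hhm (spike_injective hol hmn) M
  refine ⟨Fin.castLE hmn r, fun i => ?_⟩
  rcases hrow i with hbase | ⟨r', hr'⟩
  · simp [hbase, spikeFun_base, base]
  · have hne : r' ≠ r := by
      rintro rfl
      exact hr i hr'.symm
    rw [← hr', spikeFun_spike hol hm hmn r']
    simp [spike, Fin.val_ne_of_ne hne.symm]

theorem not_isPartialProjection_spikeFun (hol : o ≠ l) (hm : 2 ≤ m) (hmn : m ≤ n) :
    ¬ IsPartialProjection (spikeFun o l m : PFunN k n) := by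
  rintro ⟨j, hj⟩
  by_cases hjm : (j : ℕ) < m
  · have := hj _ (spike_mem_dom hjm)
    rw [spikeFun_spike hol hm hmn j] at this
    simp only [spike] at this
    exact hol this.symm
  · have := hj _ base_mem_dom
    rw [spikeFun_base] at this
    simp only [base, if_neg hjm] at this
    exact hol this

theorem not_isPartialConstant_spikeFun (hol : o ≠ l) (hm : 2 ≤ m) (hmn : m ≤ n) :
    ¬ IsPartialConstant (spikeFun o l m : PFunN k n) := by
  intro hc
  have := hc _ base_mem_dom _ (spike_mem_dom (r := 0) (by omega))
  rw [spikeFun_base, spikeFun_spike hol hm hmn 0] at this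
  exact hol this

end SpikeFun

open SpikeFun in
theorem exists_partialFun_preserving_all_general (k n h : ℕ) (hk : 2 ≤ k)
    (hh1 : 1 ≤ h) (hhn : h < n) :
    ∃ f : PFunN k n, ¬ IsPartialProjection f ∧ ¬ IsPartialConstant f ∧
      ∀ ρ : Set (Fin h → Fin k), PreservesN f ρ := by
  have hol : (⟨0, by omega⟩ : Fin k) ≠ ⟨1, by omega⟩ := by simp
  have hm : 2 ≤ h + 1 := by omega
  have hmn : h + 1 ≤ n := hhn
  exact ⟨spikeFun _ _ (h + 1), not_isPartialProjection_spikeFun hol hm hmn,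
    not_isPartialConstant_spikeFun hol hm hmn,
    (isLocallyPartialProjection_spikeFun hol hm hmn (Nat.lt_succ_self h)).preservesN⟩

/-- For `k ≥ 2`, `n ≥ 3` and `1 ≤ h < n`, there is an `n`-ary partial
function that is neither a partial projection nor a partial constant function and
preserves every `h`-ary relation on `Fin k`. -/
theorem exists_partialFun_preserving_all (k n h : ℕ) (hk : 2 ≤ k) (hn : 3 ≤ n)
    (hh1 : 1 ≤ h) (hhn : h < n) :
    ∃ f : PFunN k n, ¬ IsPartialProjection f ∧ ¬ IsPartialConstant f ∧
      ∀ ρ : Set (Fin h → Fin k), PreservesN f ρ :=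
  exists_partialFun_preserving_all_general k n h hk hh1 hhn
end

section
/- Let k ≥ 2 and let ρ_1, …, ρ_t be a finite family of non-empty relations on **k** (of arbitrary arities). Then there exists a partial function f on **k** that is neither a partial projection nor a partial constant function and that preserves every ρ_i, i = 1,…,t. Consequently, no finite family of relations on **k** is hereditarily strongly rigid. -/
/-!
For `n ≥ 3`, let `f` be defined on the almost constant tuples in `k^n` (constant outside a
single position), with the value of that constant on them. This value is the
majority of the first three coordinates, and it agrees with every coordinate other than the
deviating one. Given at most `n - 1` rows from the domain, some position deviates in none of
them, so on those rows the function is the projection to that position; hence it preserves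
every relation of arity `< n`. Choosing `n` larger than all arities handles the finite family,
while the tuples `x…x` and `x…xyx…x` (with `x ≠ y`) show that the function is neither a
partial constant nor a partial projection.
-/

theorem preservesN_of_forall_exists_proj {k n h : ℕ} (f : PFunN k n) (ρ : Set (Fin h → Fin k))
    (hf : ∀ M : Fin h → Fin n → Fin k, (∀ r, M r ∈ f.Dom) →
      ∃ j, ∀ r, f.toFun (M r) = M r j) :
    PreservesN f ρ := by
  intro M hcol hrow
  obtain ⟨j, hj⟩ := hf M hrow
  simpa only [hj] using hcol j

def almostConstant (n k : ℕ) : Set (Fin n → Fin k) :=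
  {v | ∃ s x, ∀ j, j ≠ s → v j = x}

def majority3 {α : Type*} [DecidableEq α] (a b c : α) : α :=
  if a = b then a else c

theorem majority3_eq {α : Type*} [DecidableEq α] {a b c x : α}
    (h : (a = x ∧ b = x) ∨ (a = x ∧ c = x) ∨ (b = x ∧ c = x)) : majority3 a b c = x := by
  unfold majority3
  split_ifs <;> grind

def almostConstantMajority (k n : ℕ) : PFunN k (n + 3) where
  Dom := almostConstant (n + 3) k
  toFun v := majority3 (v 0) (v 1) (v 2)

namespace almostConstantMajority

variable {k n : ℕ}

theorem toFun_eq {v : Fin (n + 3) → Fin k} {s : Fin (n + 3)} {x : Fin k}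
    (hv : ∀ j, j ≠ s → v j = x) : (almostConstantMajority k n).toFun v = x := by
  have h01 : (0 : Fin (n + 3)) ≠ 1 := by simp
  have h02 : (0 : Fin (n + 3)) ≠ 2 := by simp [Fin.ext_iff, Nat.mod_eq_of_lt]
  have h12 : (1 : Fin (n + 3)) ≠ 2 := by simp [Fin.ext_iff, Nat.mod_eq_of_lt]
  apply majority3_eq
  by_cases h0 : s = 0
  · subst h0
    exact .inr (.inr ⟨hv 1 h01.symm, hv 2 h02.symm⟩)
  · by_cases h1 : s = 1
    · subst h1
      exact .inr (.inl ⟨hv 0 h01, hv 2 h12.symm⟩)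
    · exact .inl ⟨hv 0 (Ne.symm h0), hv 1 (Ne.symm h1)⟩

theorem exists_proj_of_lt {h : ℕ} (hh : h < n + 3) (M : Fin h → Fin (n + 3) → Fin k)
    (hM : ∀ r, M r ∈ almostConstant (n + 3) k) :
    ∃ j, ∀ r, (almostConstantMajority k n).toFun (M r) = M r j := by
  choose s x hx using hM
  obtain ⟨j, hj⟩ : ∃ j, ∀ r, s r ≠ j := by
    by_contra! H
    have := Fintype.card_le_of_surjective s H
    simp only [Fintype.card_fin] at this
    omega
  exact ⟨j, fun r => (toFun_eq (hx r)).trans (hx r j (hj r).symm).symm⟩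

theorem preservesN {h : ℕ} (hh : h < n + 3) (ρ : Set (Fin h → Fin k)) :
    PreservesN (almostConstantMajority k n) ρ :=
  preservesN_of_forall_exists_proj _ ρ (exists_proj_of_lt hh)

theorem not_isPartialProjection [Nontrivial (Fin k)] :
    ¬ IsPartialProjection (almostConstantMajority k n) := by
  rintro ⟨i, hi⟩
  obtain ⟨x, y, hxy⟩ := exists_pair_ne (Fin k)
  have hv : ∀ j, j ≠ i → Function.update (fun _ => x) i y j = x := fun j hj =>
    Function.update_of_ne hj _ _
  have := hi _ ⟨i, x, hv⟩
  rw [toFun_eq hv, Function.update_self] at this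
  exact hxy this

theorem not_isPartialConstant [Nontrivial (Fin k)] :
    ¬ IsPartialConstant (almostConstantMajority k n) := by
  intro hc
  obtain ⟨x, y, hxy⟩ := exists_pair_ne (Fin k)
  have hconst : ∀ z : Fin k, ∀ j, j ≠ 0 → (fun _ => z : Fin (n + 3) → Fin k) j = z :=
    fun _ _ _ => rfl
  have := hc _ ⟨0, x, hconst x⟩ _ ⟨0, y, hconst y⟩
  rw [toFun_eq (hconst x), toFun_eq (hconst y)] at this
  exact hxy this

end almostConstantMajority

theorem no_finite_hereditarily_strongly_rigid_family_general (k t : ℕ) (hk : 2 ≤ k)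
    (a : Fin t → ℕ)
    (ρ : ∀ i : Fin t, Set (Fin (a i) → Fin k)) :
    (∃ n : ℕ, ∃ f : PFunN k n, ¬ IsPartialProjection f ∧ ¬ IsPartialConstant f ∧
        ∀ i : Fin t, PreservesN f (ρ i)) ∧
      ¬ (∀ (n : ℕ) (g : PFunN k n), (∀ i : Fin t, PreservesN g (ρ i)) →
          IsPartialProjection g ∨ IsPartialConstant g) := by
  have : Nontrivial (Fin k) := Fin.nontrivial_iff_two_le.mpr hk
  have hlt : ∀ i, a i < Finset.univ.sup a + 3 := fun i =>
    (Finset.le_sup (Finset.mem_univ i)).trans_lt (Nat.lt_add_of_pos_right (by norm_num))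
  have hwitness : ∃ n : ℕ, ∃ f : PFunN k n, ¬ IsPartialProjection f ∧
      ¬ IsPartialConstant f ∧ ∀ i : Fin t, PreservesN f (ρ i) :=
    ⟨_, almostConstantMajority k (Finset.univ.sup a),
      almostConstantMajority.not_isPartialProjection,
      almostConstantMajority.not_isPartialConstant,
      fun i => almostConstantMajority.preservesN (hlt i) (ρ i)⟩
  refine ⟨hwitness, fun H => ?_⟩
  obtain ⟨n, f, hproj, hconst, hpres⟩ := hwitness
  exact (H n f hpres).elim hproj hconst

/-- For any finite family of non-empty relations on `Fin k` (`k ≥ 2`),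
there is a partial function, neither a partial projection nor a partial constant,
preserving all of them; consequently, no finite family is hereditarily strongly rigid. -/
theorem no_finite_hereditarily_strongly_rigid_family (k t : ℕ) (hk : 2 ≤ k)
    (a : Fin t → ℕ) (ha : ∀ i, 1 ≤ a i)
    (ρ : ∀ i : Fin t, Set (Fin (a i) → Fin k)) (hne : ∀ i, (ρ i).Nonempty) :
    (∃ n : ℕ, ∃ f : PFunN k n, ¬ IsPartialProjection f ∧ ¬ IsPartialConstant f ∧
        ∀ i : Fin t, PreservesN f (ρ i)) ∧
      ¬ (∀ (n : ℕ) (g : PFunN k n), (∀ i : Fin t, PreservesN g (ρ i)) →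
          IsPartialProjection g ∨ IsPartialConstant g) :=
  no_finite_hereditarily_strongly_rigid_family_general k t hk a ρ
end

section
/- Let 1 ≤ t < h. On **2** = {0,1}, if a partial function f preserves Δ_j^{h+1} for every j with 1 ≤ j ≤ h, then f preserves Δ_t^h; that is, ⋂_{j=1}^{h} pPol(Δ_j^{h+1}) ⊆ pPol(Δ_t^h). -/
/-- For `1 ≤ t < h`, any partial function on `Fin 2` preserving
`Δ_j^{h+1}` for all `1 ≤ j ≤ h` also preserves `Δ_t^h`. -/
theorem pPol_Delta_succ_subset (h t : ℕ) (ht1 : 1 ≤ t) (hth : t < h)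
    (n : ℕ) (f : PFunN 2 n)
    (H : ∀ j : ℕ, 1 ≤ j → j ≤ h → PreservesN f (Delta j (h + 1))) :
    PreservesN f (Delta t h) := by
  intro M hcols hrows
  show (fun i => f.toFun (M i)) ≠ vtuple t h
  intro heq
  -- index map: duplicate row t-1
  set g : Fin (h+1) → Fin h := fun i =>
    if hi : (i : ℕ) < t then ⟨i, by omega⟩ else ⟨(i : ℕ) - 1, by
      have := i.isLt; omega⟩ with hgdef
  have hg1 : ∀ i : Fin (h+1), (i : ℕ) < t → ((g i : ℕ)) = (i : ℕ) := by
    intro i hi; simp [hgdef, hi]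
  have hg2 : ∀ i : Fin (h+1), ¬ (i : ℕ) < t → ((g i : ℕ)) = (i : ℕ) - 1 := by
    intro i hi; simp [hgdef, hi]
  have key := H (t+1) (by omega) (by omega) (fun i => M (g i))
    ?_ (fun i => hrows (g i))
  · apply key
    funext i
    have h1 : f.toFun (M (g i)) = vtuple t h (g i) := congrFun heq (g i)
    simp only [h1, vtuple]
    by_cases hi : (i : ℕ) < t
    · rw [if_pos (by rw [hg1 i hi]; omega), if_pos (by omega)]
    · by_cases hit : (i : ℕ) = t
      · rw [if_pos (by rw [hg2 i hi]; omega), if_pos (by omega)]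
      · have hi2 := i.isLt
        rw [if_neg (by rw [hg2 i hi]; omega), if_neg (by omega)]
  · intro c
    show (fun i => M (g i) c) ≠ vtuple (t+1) (h+1)
    intro heq'
    apply hcols c
    show (fun i => M i c) = vtuple t h
    funext j
    by_cases hj : (j : ℕ) < t
    · have hlt : (j : ℕ) < h + 1 := by omega
      have h3 := congrFun heq' ⟨(j : ℕ), hlt⟩
      have h4 : g ⟨(j : ℕ), hlt⟩ = j := by
        apply Fin.ext
        rw [hg1 _ (by simpa using hj)]
      rw [h4] at h3
      simp only [h3, vtuple]
      rw [if_pos (show ((⟨(j : ℕ), hlt⟩ : Fin (h+1)) : ℕ) < t + 1 by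
        simp; omega), if_pos hj]
    · have hlt : (j : ℕ) + 1 < h + 1 := by omega
      have h3 := congrFun heq' ⟨(j : ℕ) + 1, hlt⟩
      have h4 : g ⟨(j : ℕ) + 1, hlt⟩ = j := by
        apply Fin.ext
        rw [hg2 _ (by simp; omega)]; simp
      rw [h4] at h3
      simp only [h3, vtuple]
      rw [if_neg (show ¬ ((⟨(j : ℕ) + 1, hlt⟩ : Fin (h+1)) : ℕ) < t + 1 by
        simp; omega), if_neg hj]
end

section
/- For every h ≥ 2, pPol(F^{(h+1)}) is strictly contained in pPol(F^{(h)}) on **2** = {0,1}; that is, ⋂_{j=1}^{h} pPol(Δ_j^{h+1}) ⊊ ⋂_{j=1}^{h−1} pPol(Δ_j^h). -/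
/-- Rows of the witness matrix: `(h+1)×(h+1)` matrix with all-ones first row and
first column, and ones on the diagonal, zeros elsewhere. -/
def rowM (h : ℕ) : Fin (h+1) → Fin (h+1) → Fin 2 :=
  fun i c => if i.val = 0 ∨ c.val = 0 ∨ i.val = c.val then 1 else 0

/-- The witness partial function: domain is the set of rows of `rowM`, value `1`
exactly on the all-ones row. -/
noncomputable def witF (h : ℕ) : PFunN 2 (h+1) :=
  ⟨Set.range (rowM h), fun x => if x = rowM h 0 then 1 else 0⟩

lemma witF_preserves (h : ℕ) (hh : 2 ≤ h) (t : ℕ) (ht1 : 1 ≤ t) :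
    PreservesN (witF h) (Delta t h) := by
  intro N hcol hrow
  simp only [Delta, Set.mem_setOf_eq] at hcol ⊢
  intro heq
  have hrow' : ∀ i, ∃ g, rowM h g = N i := fun i => hrow i
  choose G hG using hrow'
  -- the finset of "used" column indices
  set T : Finset (Fin (h+1)) :=
    insert 0 (Finset.image G (Finset.univ.erase (⟨0, by omega⟩ : Fin h))) with hT
  have hcard : T.card ≤ h := by
    calc T.card ≤ (Finset.image G (Finset.univ.erase (⟨0, by omega⟩ : Fin h))).card + 1 :=
          Finset.card_insert_le _ _
    _ ≤ (Finset.univ.erase (⟨0, by omega⟩ : Fin h)).card + 1 := by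
          gcongr; exact Finset.card_image_le
    _ = (h - 1) + 1 := by rw [Finset.card_erase_of_mem (Finset.mem_univ _)]; simp
    _ ≤ h := by omega
  obtain ⟨m, hm⟩ : ∃ m : Fin (h+1), m ∉ T := by
    by_contra hcon
    push_neg at hcon
    have huniv := Finset.eq_univ_iff_forall.mpr hcon
    rw [huniv, Finset.card_univ, Fintype.card_fin] at hcard
    omega
  have hm0 : m.val ≠ 0 := by
    intro h0
    apply hm
    rw [hT]
    have hme : m = 0 := Fin.ext (by simpa using h0)
    rw [hme]
    exact Finset.mem_insert_self _ _
  apply hcol m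
  funext i
  show N i m = vtuple t h i
  have hv := congrFun heq i
  by_cases hi : (i : ℕ) < t
  · have h1 : vtuple t h i = 1 := by simp [vtuple, hi]
    rw [h1] at hv
    have hNi : N i = rowM h 0 := by
      by_contra hne
      simp [witF, hne] at hv
    rw [hNi]
    simp [rowM, vtuple, hi]
  · have h1 : vtuple t h i = 0 := by simp [vtuple, hi]
    rw [h1] at hv
    have hNi : N i ≠ rowM h 0 := by
      intro hne
      simp [witF, hne] at hv
    have hGi0 : (G i).val ≠ 0 := by
      intro hg
      apply hNi
      rw [← hG i]
      funext c
      simp [rowM, hg]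
    have hiT : i ∈ Finset.univ.erase (⟨0, by omega⟩ : Fin h) := by
      refine Finset.mem_erase.mpr ⟨?_, Finset.mem_univ _⟩
      intro h0; apply hi
      have : (i : ℕ) = 0 := by rw [h0]
      omega
    have hmG : m ≠ G i := by
      intro hmg
      apply hm
      rw [hT]
      apply Finset.mem_insert_of_mem
      exact Finset.mem_image.mpr ⟨i, hiT, hmg.symm⟩
    have hmG' : (G i).val ≠ m.val := fun e => hmG (Fin.ext e.symm)
    rw [← hG i]
    simp [rowM, vtuple, hi, hGi0, hm0, hmG']

lemma witF_not_preserves (h : ℕ) (hh : 2 ≤ h) :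
    ¬ PreservesN (witF h) (Delta 1 (h+1)) := by
  intro hP
  have hcols : ∀ c : Fin (h+1), (fun i => rowM h i c) ∈ Delta 1 (h+1) := by
    intro c
    simp only [Delta, Set.mem_setOf_eq]
    intro heq
    by_cases hc : c.val = 0
    · have := congrFun heq ⟨1, by omega⟩
      simp [rowM, vtuple, hc] at this
    · have := congrFun heq c
      simp only [rowM, vtuple] at this
      rw [if_pos (by tauto), if_neg (by omega)] at this
      exact absurd this (by decide)
  have hrows : ∀ i, rowM h i ∈ (witF h).Dom := fun i => ⟨i, rfl⟩
  have hval := hP (fun i => rowM h i) hcols hrows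
  simp only [Delta, Set.mem_setOf_eq] at hval
  apply hval
  funext i
  show (witF h).toFun (rowM h i) = vtuple 1 (h+1) i
  by_cases hi : i.val = 0
  · have he : rowM h i = rowM h 0 := by
      funext c; simp [rowM, hi]
    rw [he]
    simp [witF, vtuple, hi]
  · have hne : rowM h i ≠ rowM h 0 := by
      intro he
      set c : Fin (h+1) := if i.val = 1 then ⟨2, by omega⟩ else ⟨1, by omega⟩ with hcdef
      have hc0 : c.val ≠ 0 := by
        rw [hcdef]; split <;> simp
      have hci : c.val ≠ i.val := by
        rw [hcdef]; split <;> simp <;> omega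
      have hevc := congrFun he c
      simp only [rowM] at hevc
      rw [if_neg (by push_neg; exact ⟨hi, hc0, fun e => hci e.symm⟩)] at hevc
      rw [if_pos (by simp)] at hevc
      exact absurd hevc (by decide)
    simp [witF, hne, vtuple, hi]

lemma part1_aux (h : ℕ) (hh : 2 ≤ h) (n : ℕ) (f : PFunN 2 n)
    (hf : ∀ j : ℕ, 1 ≤ j → j ≤ h → PreservesN f (Delta j (h + 1)))
    (j : ℕ) (hj1 : 1 ≤ j) (hj2 : j ≤ h - 1) : PreservesN f (Delta j h) := by
  intro M hcol hrow
  have key := hf (j+1) (by omega) (by omega)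
  -- duplicate row 0
  set M' : Fin (h+1) → Fin n → Fin 2 :=
    fun i c => M ⟨i.val - 1, by have := i.isLt; omega⟩ c with hM'
  have hcol' : ∀ c : Fin n, (fun i : Fin (h+1) => M' i c) ∈ Delta (j+1) (h+1) := by
    intro c
    simp only [Delta, Set.mem_setOf_eq]
    intro hceq
    apply hcol c
    funext i
    have hc := congrFun hceq ⟨i.val + 1, by have := i.isLt; omega⟩
    simp only [hM', vtuple] at hc
    have he : (⟨i.val + 1 - 1, by have := i.isLt; omega⟩ : Fin h) = i := by
      apply Fin.ext; simp
    rw [he] at hc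
    rw [hc]
    simp only [vtuple]
    split_ifs with h1 h2 h2 <;> first | rfl | omega
  have hrow' : ∀ i : Fin (h+1), M' i ∈ f.Dom := fun i => hrow _
  have hres := key M' hcol' hrow'
  simp only [Delta, Set.mem_setOf_eq] at hres ⊢
  intro heq
  apply hres
  funext i
  have hv := congrFun heq (⟨i.val - 1, by have := i.isLt; omega⟩ : Fin h)
  simp only [vtuple] at hv
  show f.toFun (M' i) = vtuple (j+1) (h+1) i
  simp only [hM']
  rw [hv]
  simp only [vtuple]
  have := i.isLt
  split_ifs with h1 h2 h2 <;> first | rfl | omega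

/-- For `h ≥ 2`, `pPol(F^{(h+1)})` is strictly contained in `pPol(F^{(h)})`:
every partial function preserving all `Δ_j^{h+1}` (`1 ≤ j ≤ h`) preserves all `Δ_j^h`
(`1 ≤ j ≤ h-1`), and some partial function preserves all `Δ_j^h` (`1 ≤ j ≤ h-1`) but
fails to preserve some `Δ_j^{h+1}` (`1 ≤ j ≤ h`). -/
theorem pPol_F_strict_anti (h : ℕ) (hh : 2 ≤ h) :
    (∀ (n : ℕ) (f : PFunN 2 n),
        (∀ j : ℕ, 1 ≤ j → j ≤ h → PreservesN f (Delta j (h + 1))) →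
        ∀ j : ℕ, 1 ≤ j → j ≤ h - 1 → PreservesN f (Delta j h)) ∧
    (∃ (n : ℕ) (f : PFunN 2 n),
        (∀ j : ℕ, 1 ≤ j → j ≤ h - 1 → PreservesN f (Delta j h)) ∧
        ∃ j : ℕ, 1 ≤ j ∧ j ≤ h ∧ ¬ PreservesN f (Delta j (h + 1))) := by
  constructor
  · intro n f hf j hj1 hj2
    exact part1_aux h hh n f hf j hj1 hj2
  · exact ⟨h + 1, witF h,
      fun j hj1 _ => witF_preserves h hh j hj1,
      1, le_refl 1, by omega, witF_not_preserves h hh⟩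
end

section
/- Let f be an n-ary partial function on **2** = {0,1} with non-empty domain that is neither a partial projection nor a partial constant function. Then there exists h ≥ 2 such that f ∉ pPol(F^{(h)}); that is, f fails to preserve Δ_t^h for some 1 ≤ t < h. -/
/-- Every partial function on `Fin 2` with non-empty domain that is neither
a partial projection nor a partial constant fails to preserve `Δ_t^h` for some
`h ≥ 2` and `1 ≤ t < h`. -/
theorem exists_Delta_not_preserved (n : ℕ) (f : PFunN 2 n) (hdom : f.Dom.Nonempty)
    (hp : ¬ IsPartialProjection f) (hc : ¬ IsPartialConstant f) :
    ∃ h : ℕ, 2 ≤ h ∧ ∃ t : ℕ, 1 ≤ t ∧ t < h ∧ ¬ PreservesN f (Delta t h) := by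
  classical
  have fin2 : ∀ x : Fin 2, x = 0 ∨ x = 1 := by decide
  simp only [IsPartialProjection, not_exists] at hp
  push_neg at hp
  choose w hw1 hw2 using hp
  simp only [IsPartialConstant] at hc
  push_neg at hc
  obtain ⟨x, hx, y, hy, hxy⟩ := hc
  obtain ⟨a, ha, hfa, b, hb, hfb⟩ :
      ∃ a ∈ f.Dom, f.toFun a = 1 ∧ ∃ b ∈ f.Dom, f.toFun b = 0 := by
    rcases fin2 (f.toFun x) with h0 | h1
    · rcases fin2 (f.toFun y) with h0' | h1'
      · exact absurd (h0.trans h0'.symm) hxy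
      · exact ⟨y, hy, h1', x, hx, h0⟩
    · rcases fin2 (f.toFun y) with h0' | h1'
      · exact ⟨x, hx, h1, y, hy, h0'⟩
      · exact absurd (h1.trans h1'.symm) hxy
  set M : Fin (2*n+2) → Fin n → Fin 2 := fun i =>
    if hi : (i : ℕ) < n then (if f.toFun (w ⟨i, hi⟩) = 1 then w ⟨i, hi⟩ else a)
    else if (i : ℕ) = n then a
    else if hi2 : (i : ℕ) - (n+1) < n then
      (if f.toFun (w ⟨(i:ℕ)-(n+1), hi2⟩) = 1 then b else w ⟨(i:ℕ)-(n+1), hi2⟩)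
    else b with hM
  have hrow : ∀ i, M i ∈ f.Dom := by
    intro i
    rw [hM]
    dsimp only
    split_ifs <;> first | exact hw1 _ | exact ha | exact hb
  have hval : ∀ i : Fin (2*n+2), f.toFun (M i) = vtuple (n+1) (2*n+2) i := by
    intro i
    rw [hM, vtuple]
    dsimp only
    rcases Nat.lt_or_ge (i : ℕ) n with h1 | h1
    · rw [dif_pos h1, if_pos (show (i : ℕ) < n+1 by omega)]
      rcases fin2 (f.toFun (w ⟨(i : ℕ), h1⟩)) with hh | hh
      · rw [if_neg (show ¬ f.toFun (w ⟨(i:ℕ), h1⟩) = 1 by simp [hh])]; exact hfa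
      · rw [if_pos hh]; exact hh
    · rw [dif_neg (show ¬ (i : ℕ) < n by omega)]
      rcases Nat.eq_or_lt_of_le h1 with h2 | h2
      · rw [if_pos h2.symm, if_pos (show (i : ℕ) < n+1 by omega)]; exact hfa
      · rw [if_neg (show ¬ (i : ℕ) = n by omega),
            if_neg (show ¬ (i : ℕ) < n+1 by omega)]
        by_cases h3 : (i : ℕ) - (n+1) < n
        · rw [dif_pos h3]
          rcases fin2 (f.toFun (w ⟨(i : ℕ) - (n+1), h3⟩)) with hh | hh
          · rw [if_neg (show ¬ f.toFun (w ⟨(i:ℕ)-(n+1), h3⟩) = 1 by simp [hh])]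
            exact hh
          · rw [if_pos hh]; exact hfb
        · rw [dif_neg h3]; exact hfb
  have hcol : ∀ j : Fin n, (fun i : Fin (2*n+2) => M i j) ∈ Delta (n+1) (2*n+2) := by
    intro j heq
    rcases fin2 (f.toFun (w j)) with hh | hh
    · -- f (w j) = 0 : witness at row n+1+j
      have hi : (n + 1 + (j : ℕ)) < 2*n+2 := by omega
      have key : M ⟨n + 1 + (j : ℕ), hi⟩ = w j := by
        rw [hM]
        dsimp only
        rw [dif_neg (show ¬ (n+1+(j:ℕ)) < n by omega),
            if_neg (show ¬ (n+1+(j:ℕ)) = n by omega),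
            dif_pos (show (n+1+(j:ℕ)) - (n+1) < n by omega)]
        simp only [show (n+1+(j:ℕ)) - (n+1) = (j:ℕ) from by omega, Fin.eta]
        rw [if_neg (show ¬ f.toFun (w j) = 1 by simp [hh])]
      have hvt : vtuple (n+1) (2*n+2) ⟨n + 1 + (j : ℕ), hi⟩ = 0 := by
        rw [vtuple]
        dsimp only
        rw [if_neg (show ¬ (n+1+(j:ℕ)) < n+1 by omega)]
      have hv := congrFun heq ⟨n + 1 + (j : ℕ), hi⟩
      rw [key, hvt] at hv
      exact hw2 j (hh.trans hv.symm)
    · -- f (w j) = 1 : witness at row j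
      have hi : ((j : ℕ)) < 2*n+2 := by omega
      have key : M ⟨(j : ℕ), hi⟩ = w j := by
        rw [hM]
        dsimp only
        rw [dif_pos (show ((j : ℕ)) < n from j.isLt)]
        simp only [Fin.eta]
        rw [if_pos hh]
      have hvt : vtuple (n+1) (2*n+2) ⟨(j : ℕ), hi⟩ = 1 := by
        rw [vtuple]
        dsimp only
        rw [if_pos (show ((j : ℕ)) < n+1 from Nat.lt_succ_of_lt j.isLt)]
      have hv := congrFun heq ⟨(j : ℕ), hi⟩
      rw [key, hvt] at hv
      exact hw2 j (hh.trans hv.symm)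
  refine ⟨2*n+2, by omega, n+1, by omega, by omega, fun hpres => ?_⟩
  exact hpres M hcol hrow (funext hval)
end

section
/- A partial function f on **2** = {0,1} preserves Δ_t^h for every h ≥ 2 and every 1 ≤ t < h if and only if f is a partial projection or a partial constant function. Equivalently, ⋂_{h ≥ 2} pPol(F^{(h)}) equals the strong partial clone generated by the partial constant functions on **2**, so the family ⋃_{h ≥ 2} F^{(h)} is hereditarily strongly rigid. -/
lemma fin2_cases' : ∀ a b : Fin 2, a ≠ b → (a = 1 ∧ b = 0) ∨ (a = 0 ∧ b = 1) := by decide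

lemma fin2_ne_one (a : Fin 2) : a ≠ 1 → a = 0 := by revert a; decide

/-- A partial function on `Fin 2` preserves `Δ_t^h` for all `h ≥ 2` and
`1 ≤ t < h` iff it is a partial projection or a partial constant function; i.e. the
family `⋃_{h ≥ 2} F^{(h)}` is hereditarily strongly rigid. -/
theorem preserves_all_Delta_iff (n : ℕ) (f : PFunN 2 n) :
    (∀ h t : ℕ, 2 ≤ h → 1 ≤ t → t < h → PreservesN f (Delta t h)) ↔
      IsPartialProjection f ∨ IsPartialConstant f := by
  constructor
  · intro hp
    by_cases hc : IsPartialConstant f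
    · exact Or.inr hc
    left
    unfold IsPartialConstant at hc
    push_neg at hc
    obtain ⟨x0, hx0, y0, hy0, hxy⟩ := hc
    classical
    -- normalize so that f x = 1, f y = 0
    obtain ⟨x, hx, y, hy, hfx, hfy⟩ :
        ∃ x ∈ f.Dom, ∃ y ∈ f.Dom, f.toFun x = 1 ∧ f.toFun y = 0 := by
      rcases fin2_cases' _ _ hxy with ⟨h1, h2⟩ | ⟨h1, h2⟩
      · exact ⟨x0, hx0, y0, hy0, h1, h2⟩
      · exact ⟨y0, hy0, x0, hx0, h2, h1⟩
    have hfin := Set.toFinite f.Dom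
    set D : Finset (Fin n → Fin 2) := hfin.toFinset with hD
    have hmemD : ∀ z, z ∈ D ↔ z ∈ f.Dom := fun z => hfin.mem_toFinset
    set D1 := D.filter (fun z => f.toFun z = 1) with hD1
    set D0 := D.filter (fun z => ¬ f.toFun z = 1) with hD0
    set t := D1.card with ht
    set m := D0.card with hm
    have hcard : t + m = D.card :=
      Finset.card_filter_add_card_filter_not _
    set h := D.card with hh
    have hxD1 : x ∈ D1 := Finset.mem_filter.mpr ⟨(hmemD x).mpr hx, hfx⟩
    have hyD0 : y ∈ D0 := Finset.mem_filter.mpr ⟨(hmemD y).mpr hy, by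
      rw [hfy]; decide⟩
    have ht1 : 1 ≤ t := Finset.card_pos.mpr ⟨x, hxD1⟩
    have hm1 : 1 ≤ m := Finset.card_pos.mpr ⟨y, hyD0⟩
    have hth : t < h := by omega
    have h2h : 2 ≤ h := by omega
    -- enumerations
    let e1 : Fin t ≃ {z // z ∈ D1} := D1.equivFin.symm
    let e0 : Fin m ≃ {z // z ∈ D0} := D0.equivFin.symm
    -- the row function
    let r : Fin h → (Fin n → Fin 2) := fun i =>
      if h' : (i : ℕ) < t then (e1 ⟨i, h'⟩ : {z // z ∈ D1}).1
      else (e0 ⟨(i : ℕ) - t, by omega⟩ : {z // z ∈ D0}).1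
    have hrD : ∀ i, r i ∈ D := by
      intro i
      by_cases h' : (i : ℕ) < t
      · simp only [r, dif_pos h']
        exact (Finset.mem_filter.mp (e1 ⟨i, h'⟩).2).1
      · simp only [r, dif_neg h']
        exact (Finset.mem_filter.mp (e0 ⟨(i : ℕ) - t, by omega⟩).2).1
    have hrval : ∀ i, f.toFun (r i) = vtuple t h i := by
      intro i
      by_cases h' : (i : ℕ) < t
      · simp only [r, dif_pos h', vtuple, if_pos h']
        exact (Finset.mem_filter.mp (e1 ⟨i, h'⟩).2).2
      · simp only [r, dif_neg h', vtuple, if_neg h']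
        exact fin2_ne_one _ (Finset.mem_filter.mp
          (e0 ⟨(i : ℕ) - t, by omega⟩).2).2
    have hsurj : ∀ z ∈ D, ∃ i : Fin h, r i = z := by
      intro z hz
      by_cases h' : f.toFun z = 1
      · have hz1 : z ∈ D1 := Finset.mem_filter.mpr ⟨hz, h'⟩
        set k := e1.symm ⟨z, hz1⟩ with hk
        refine ⟨⟨(k : ℕ), by omega⟩, ?_⟩
        have hlt : ((⟨(k : ℕ), by omega⟩ : Fin h) : ℕ) < t := k.isLt
        simp only [r, dif_pos hlt]
        have : (⟨(k : ℕ), k.isLt⟩ : Fin t) = k := rfl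
        rw [this, hk]
        simp
      · have hz0 : z ∈ D0 := Finset.mem_filter.mpr ⟨hz, h'⟩
        set k := e0.symm ⟨z, hz0⟩ with hk
        refine ⟨⟨t + (k : ℕ), by omega⟩, ?_⟩
        have hnlt : ¬ ((⟨t + (k : ℕ), by omega⟩ : Fin h) : ℕ) < t :=
          by simp only [Fin.val_mk]; omega
        simp only [r, dif_neg hnlt]
        have : (⟨t + (k : ℕ) - t, by omega⟩ : Fin m) = k := by
          apply Fin.ext; simp
        rw [this, hk]
        simp
    -- apply preservation
    have hpres := hp h t h2h ht1 hth (fun i j => r i j)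
    have hnotall : ¬ ∀ j : Fin n, (fun i => r i j) ∈ Delta t h := by
      intro hall
      have := hpres hall (fun i => (hmemD (r i)).mp (hrD i))
      apply this
      funext i
      exact hrval i
    push_neg at hnotall
    obtain ⟨j, hj⟩ := hnotall
    have hcol : (fun i => r i j) = vtuple t h := not_not.mp hj
    refine ⟨j, ?_⟩
    intro z hz
    obtain ⟨i, hi⟩ := hsurj z ((hmemD z).mpr hz)
    have h1 : r i j = vtuple t h i := congrFun hcol i
    rw [hi] at h1
    rw [← hi, hrval i, ← h1, hi]
  · rintro (⟨i, hi⟩ | hc) h t h2 h1 hth M hcol hrow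
    · have : (fun k => f.toFun (M k)) = fun k => M k i :=
        funext fun k => hi _ (hrow k)
      rw [this]
      exact hcol i
    · intro hbad
      have h0 : f.toFun (M ⟨0, by omega⟩) = vtuple t h ⟨0, by omega⟩ :=
        congrFun hbad _
      have hT : f.toFun (M ⟨t, hth⟩) = vtuple t h ⟨t, hth⟩ :=
        congrFun hbad _
      have hce := hc _ (hrow ⟨0, by omega⟩) _ (hrow ⟨t, hth⟩)
      rw [hce] at h0
      simp only [vtuple] at h0 hT
      rw [if_pos (by omega : (0:ℕ) < t)] at h0
      rw [if_neg (by omega : ¬ (t:ℕ) < t)] at hT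
      rw [h0] at hT
      exact absurd hT (by decide)
end
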